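/- arXiv:1411.4943 — 9 statements merged into one kernel-verified Lean document; each statement's English description precedes it below -/
import Mathlib

section
/- Let G be an affine nonatomic routing game and let r ≥ 2. If s* is a WCC equilibrium flow of G for homogeneous uncertainty r, then for every feasible flow s_O of G, SC(s*) ≤ (r/2)·SC(s_O). In particular the price of anarchy for WCC players with uncertainty r is at most r/2. -/
open Finset

/-- An affine nonatomic routing game on edge set `E` with agent types `ι`:
each edge `e` has cost `c_e(t) = a_e t + b_e` with `a_e, b_e ≥ 0`; each type `i`
has a nonempty finite collection `paths i` of (nonempty) paths and a mass `mass i ≥ 0`. -/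
structure AffineNRG (E ι : Type) [Fintype E] [DecidableEq E] [Fintype ι] where
  a : E → ℝ
  b : E → ℝ
  a_nonneg : ∀ e, 0 ≤ a e
  b_nonneg : ∀ e, 0 ≤ b e
  paths : ι → Finset (Finset E)
  paths_nonempty : ∀ i, (paths i).Nonempty
  path_mem_nonempty : ∀ i, ∀ f ∈ paths i, f.Nonempty
  mass : ι → ℝ
  mass_nonneg : ∀ i, 0 ≤ mass i

namespace AffineNRG

variable {E ι : Type} [Fintype E] [DecidableEq E] [Fintype ι]

/-- A feasible flow assigns a nonnegative amount to each path of each type,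
with the amounts of type `i` summing to `mass i`. -/
def Feasible (G : AffineNRG E ι) (s : ι → Finset E → ℝ) : Prop :=
  (∀ i f, 0 ≤ s i f) ∧ ∀ i, ∑ f ∈ G.paths i, s i f = G.mass i

/-- The load induced on edge `e` by flow `s`. -/
def load (G : AffineNRG E ι) (s : ι → Finset E → ℝ) (e : E) : ℝ :=
  ∑ i, ∑ f ∈ (G.paths i).filter (fun f => e ∈ f), s i f

/-- The social cost `SC(s) = Σ_e (a_e s̄_e² + b_e s̄_e)`. -/
def SC (G : AffineNRG E ι) (s : ι → Finset E → ℝ) : ℝ :=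
  ∑ e, (G.a e * (G.load s e) ^ 2 + G.b e * G.load s e)

/-- `s` is a WCC equilibrium for uncertainty parameters `r = (r_i)`: it is feasible and
every type-`i` used path has modified cost (`Σ_{e∈f} (r_i a_e s̄_e + b_e)`)
no larger than any other type-`i` path. -/
def WCCEq (G : AffineNRG E ι) (r : ι → ℝ) (s : ι → Finset E → ℝ) : Prop :=
  G.Feasible s ∧ ∀ i, ∀ f₁ ∈ G.paths i, ∀ f₂ ∈ G.paths i, 0 < s i f₁ →
    ∑ e ∈ f₁, (r i * G.a e * G.load s e + G.b e) ≤
      ∑ e ∈ f₂, (r i * G.a e * G.load s e + G.b e)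

end AffineNRG

open AffineNRG in
/-- For `r ≥ 2`, every WCC equilibrium flow of an affine NRG for homogeneous uncertainty `r`
has social cost at most `r/2` times the social cost of any feasible flow; in particular
the price of anarchy for WCC players with uncertainty `r` is at most `r/2`. -/
theorem stmt_1 {E ι : Type} [Fintype E] [DecidableEq E] [Fintype ι] [Nonempty E]
    (G : AffineNRG E ι) (r : ℝ) (hr : 2 ≤ r)
    (s : ι → Finset E → ℝ) (hs : G.WCCEq (fun _ => r) s)
    (sO : ι → Finset E → ℝ) (hsO : G.Feasible sO) :
    G.SC s ≤ r / 2 * G.SC sO := by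

  obtain ⟨⟨hsnn, hssum⟩, heq⟩ := hs
  obtain ⟨hOnn, hOsum⟩ := hsO
  set g : E → ℝ := fun e => r * G.a e * G.load s e + G.b e with hg
  have hxnn : ∀ e, 0 ≤ G.load s e := fun e =>
    Finset.sum_nonneg fun i _ => Finset.sum_nonneg fun f _ => hsnn i f
  have hynn : ∀ e, 0 ≤ G.load sO e := fun e =>
    Finset.sum_nonneg fun i _ => Finset.sum_nonneg fun f _ => hOnn i f
  have hswap : ∀ t : ι → Finset E → ℝ,
      ∑ e, g e * G.load t e = ∑ i, ∑ f ∈ G.paths i, t i f * ∑ e ∈ f, g e := by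
    intro t
    simp only [AffineNRG.load, Finset.mul_sum]
    rw [Finset.sum_comm]
    apply Finset.sum_congr rfl
    intro i _
    simp only [Finset.sum_filter]
    rw [Finset.sum_comm]
    apply Finset.sum_congr rfl
    intro f hf
    rw [Finset.sum_ite_mem, Finset.univ_inter]
    apply Finset.sum_congr rfl
    intro e _
    ring
  have hVI : ∑ e, g e * G.load s e ≤ ∑ e, g e * G.load sO e := by
    rw [hswap s, hswap sO]
    apply Finset.sum_le_sum
    intro i _
    obtain ⟨f0, hf0, hf0min⟩ := (G.paths i).exists_min_image (fun f => ∑ e ∈ f, g e)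
      (G.paths_nonempty i)
    calc ∑ f ∈ G.paths i, s i f * ∑ e ∈ f, g e
        = ∑ f ∈ G.paths i, s i f * ∑ e ∈ f0, g e := by
          apply Finset.sum_congr rfl
          intro f hf
          rcases eq_or_lt_of_le (hsnn i f) with h | h
          · rw [← h, zero_mul, zero_mul]
          · have h1 := heq i f hf f0 hf0 h
            have h2 := hf0min f hf
            simp only at h1 h2 ⊢
            rw [le_antisymm h1 h2]
      _ = G.mass i * ∑ e ∈ f0, g e := by rw [← Finset.sum_mul, hssum i]
      _ = ∑ f ∈ G.paths i, sO i f * ∑ e ∈ f0, g e := by rw [← Finset.sum_mul, hOsum i]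
      _ ≤ ∑ f ∈ G.paths i, sO i f * ∑ e ∈ f, g e := by
          apply Finset.sum_le_sum
          intro f hf
          exact mul_le_mul_of_nonneg_left (hf0min f hf) (hOnn i f)
  set A := ∑ e, G.a e * G.load s e ^ 2 with hA'
  set B := ∑ e, G.b e * G.load s e with hB'
  set C := ∑ e, G.a e * G.load sO e ^ 2 with hC'
  set D := ∑ e, G.b e * G.load sO e with hD'
  have hA : 0 ≤ A := Finset.sum_nonneg fun e _ =>
    mul_nonneg (G.a_nonneg e) (sq_nonneg _)
  have hB : 0 ≤ B := Finset.sum_nonneg fun e _ =>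
    mul_nonneg (G.b_nonneg e) (hxnn e)
  have hC : 0 ≤ C := Finset.sum_nonneg fun e _ =>
    mul_nonneg (G.a_nonneg e) (sq_nonneg _)
  have hD : 0 ≤ D := Finset.sum_nonneg fun e _ =>
    mul_nonneg (G.b_nonneg e) (hynn e)
  have hkey : r * A + B ≤ r / 2 * A + r / 2 * C + D := by
    have h1 : ∑ e, g e * G.load s e = r * A + B := by
      simp only [hg, hA', hB', Finset.mul_sum, ← Finset.sum_add_distrib]
      apply Finset.sum_congr rfl
      intro e _
      ring
    have h2 : ∑ e, g e * G.load sO e ≤ r / 2 * A + r / 2 * C + D := by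
      simp only [hg, hA', hC', hD', Finset.mul_sum, ← Finset.sum_add_distrib]
      apply Finset.sum_le_sum
      intro e _
      have := G.a_nonneg e
      nlinarith [sq_nonneg (G.load s e - G.load sO e), hxnn e, hynn e,
        mul_nonneg this (sq_nonneg (G.load s e - G.load sO e))]
    linarith [hVI, h1.symm.le, h2]
  have hSCs : G.SC s = A + B := by
    simp [AffineNRG.SC, hA', hB', Finset.sum_add_distrib]
  have hSCO : G.SC sO = C + D := by
    simp [AffineNRG.SC, hC', hD', Finset.sum_add_distrib]
  rw [hSCs, hSCO]
  nlinarith [hkey, hA, hB, hC, hD]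
end

section
/- There exists a constant C > 0 such that the following holds. Let G be an affine resource selection game with exactly two agent types j and k having uncertainty parameters 2 ≤ r_j < r_k and masses n_j, n_k > 0 with n = n_j + n_k. Then every WCC equilibrium flow s* of G for the vector (r_j, r_k) satisfies SC(s*) ≤ (r_j/2 + (n_k/n)·C·r_k)·SC(s_O) for every feasible flow s_O. -/
/-!
Write `x₀, x₁` for the loads of types `j` and `k` at the equilibrium and `y` for the load of
`s_O`. Given `x₁`, the flow `x₀` is a Wardrop flow for the costs `r_j aₑ t + bₑ + r_j aₑ x₁ₑ`,
so it minimises their Beckmann potential `Φ` among flows of mass at least `n_j`. Since `r_j ≥ 2`,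
`SC(s) ≤ Φ(x₀) + n_k L_k`, where `L_k` is the common perceived cost of type `k`, and comparing
`L_k` with the costs of `y` edge by edge gives `n L_k ≤ 4 r_k SC(s_O)`. Finally `Φ` is evaluated
at `v = y - min(y, 2x₁) + (n_k/n) y`, a flow of mass at least `n_j`: removing `min(y, 2x₁)`
cancels the interaction term `r_j aₑ x₁ₑ yₑ`, so that
`Φ(v) ≤ (r_j/2)(1 + n_k/n)² SC(s_O) + O((n_k/n) r_k SC(s_O))`.
-/

open Finset

namespace AffineNRG

/-- A resource selection game: every type's strategy set is the set of singleton edges. -/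
def IsRSG {E ι : Type} [Fintype E] [DecidableEq E] [Fintype ι] (G : AffineNRG E ι) : Prop :=
  ∀ i, G.paths i = Finset.univ.image (fun e => ({e} : Finset E))

end AffineNRG

lemma beckmann_tangent_le {r a c x v : ℝ} (hra : 0 ≤ r * a) :
    r / 2 * a * x ^ 2 + c * x + (r * a * x + c) * (v - x) ≤ r / 2 * a * v ^ 2 + c * v := by
  nlinarith [mul_nonneg hra (sq_nonneg (v - x))]

lemma cost_le_beckmann_add {r a b x₀ x₁ : ℝ} (hr : 2 ≤ r) (ha : 0 ≤ a) (hx₀ : 0 ≤ x₀)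
    (hx₁ : 0 ≤ x₁) :
    a * (x₀ + x₁) ^ 2 + b * (x₀ + x₁) ≤
      r / 2 * a * x₀ ^ 2 + (b + r * a * x₁) * x₀ + x₁ * (a * (x₀ + x₁) + b) := by
  nlinarith [mul_nonneg (sub_nonneg.2 hr) (mul_nonneg ha (mul_nonneg hx₀ hx₁)),
    mul_nonneg (sub_nonneg.2 hr) (mul_nonneg ha (sq_nonneg x₀)),
    mul_nonneg ha (mul_nonneg hx₀ hx₁)]

lemma mul_le_level_of_support {r a b x₀ x₁ L : ℝ} (hr : 0 ≤ r) (ha : 0 ≤ a) (hb : 0 ≤ b)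
    (hx₀ : 0 ≤ x₀) (hx₁ : 0 ≤ x₁) (hL : 0 ≤ L) (hsupp : 0 < x₁ → r * a * (x₀ + x₁) + b = L) :
    r * a * x₁ ≤ L := by
  rcases hx₁.eq_or_lt with h | h
  · simpa [← h] using hL
  · nlinarith [hsupp h, mul_nonneg (mul_nonneg hr ha) hx₀]

lemma cost_mul_le_level_mul {r a b x₀ x₁ L : ℝ} (hr : 1 ≤ r) (ha : 0 ≤ a) (hx₀ : 0 ≤ x₀)
    (hx₁ : 0 ≤ x₁) (hsupp : 0 < x₁ → r * a * (x₀ + x₁) + b = L) :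
    x₁ * (a * (x₀ + x₁) + b) ≤ L * x₁ := by
  rcases hx₁.eq_or_lt with h | h
  · simp [← h]
  · rw [← hsupp h]
    nlinarith [mul_nonneg (mul_nonneg (sub_nonneg.2 hr) ha) (mul_nonneg (add_nonneg hx₀ hx₁) hx₁)]

lemma level_mul_le {r a b L X y : ℝ} (hr : 0 ≤ r) (ha : 0 ≤ a) (hb : 0 ≤ b) (hL : 0 ≤ L)
    (hX : 0 ≤ X) (hy : 0 ≤ y) (hLX : L ≤ r * a * X + b) :
    L * y ≤ 2 * r * (a * y ^ 2) + b * y + L * X / 2 := by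
  rcases le_or_gt X (2 * y) with hXy | hXy
  · nlinarith [mul_nonneg (mul_nonneg hr ha) (mul_nonneg (sub_nonneg.2 hXy) hy),
      mul_nonneg (sub_nonneg.2 hLX) hy, mul_nonneg hL hX]
  · nlinarith [mul_nonneg (mul_nonneg hr ha) (sq_nonneg y), mul_nonneg hb hy]

lemma beckmann_comparison_le {r a b z y ε L : ℝ} (hr : 0 ≤ r) (ha : 0 ≤ a) (hb : 0 ≤ b)
    (hz : 0 ≤ z) (hy : 0 ≤ y) (hε : 0 ≤ ε) (hL : r * a * z ≤ L) :
    r / 2 * a * (y - min y (2 * z) + ε * y) ^ 2 + (b + r * a * z) * (y - min y (2 * z) + ε * y)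
      ≤ r / 2 * (1 + ε) ^ 2 * (a * y ^ 2) + (1 + ε) * (b * y) + ε * L * y := by
  set w := min y (2 * z)
  have hw₀ : 0 ≤ w := le_min hy (by linarith)
  have hwy : w ≤ y := min_le_left _ _
  have hsq : (y - w + ε * y) ^ 2 ≤ (1 + ε) ^ 2 * y ^ 2 - y * w := by
    nlinarith [mul_nonneg hw₀ (sub_nonneg.2 hwy), mul_nonneg (mul_nonneg hε hy) hw₀]
  have hcross : r * a * z * (y - w) ≤ r / 2 * a * (y * w) := by
    rcases le_total y (2 * z) with h | h
    · rw [show w = y from min_eq_left h]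
      nlinarith [mul_nonneg (mul_nonneg hr ha) (sq_nonneg y)]
    · rw [show w = 2 * z from min_eq_right h]
      nlinarith [mul_nonneg (mul_nonneg hr ha) (sq_nonneg z)]
  have hlin : b * (y - w + ε * y) ≤ (1 + ε) * (b * y) := by
    nlinarith [mul_nonneg hb hw₀]
  have hint : r * a * z * (ε * y) ≤ ε * L * y := by
    nlinarith [mul_le_mul_of_nonneg_left hL (mul_nonneg hε hy)]
  nlinarith [mul_le_mul_of_nonneg_left hsq (by positivity : 0 ≤ r / 2 * a)]

lemma two_class_bound_arith {rj rk Q Y B M : ℝ} (hrj : 2 ≤ rj) (hrjk : rj ≤ rk) (hQ₀ : 0 ≤ Q)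
    (hQ₁ : Q ≤ 1) (hY : 0 ≤ Y) (hB : 0 ≤ B) (hM : M ≤ 4 * rk * Y + 2 * B) :
    rj / 2 * (1 + Q) ^ 2 * Y + (1 + Q) * B + 2 * (Q * M) ≤ (rj / 2 + Q * 10 * rk) * (Y + B) := by
  nlinarith [mul_le_mul_of_nonneg_left hM hQ₀, mul_nonneg (mul_nonneg hQ₀ (sub_nonneg.2 hQ₁)) hY,
    mul_nonneg (mul_nonneg hQ₀ (sub_nonneg.2 hrjk)) hY, mul_nonneg (sub_nonneg.2 hrj) hB,
    mul_nonneg (mul_nonneg hQ₀ (sub_nonneg.2 hQ₁)) (mul_nonneg (by linarith : (0:ℝ) ≤ rj) hY),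
    mul_nonneg (mul_nonneg hQ₀ (sub_nonneg.2 (hrj.trans hrjk))) hB,
    mul_nonneg (mul_nonneg hQ₀ (by linarith : (0:ℝ) ≤ rk)) hY, mul_nonneg hQ₀ hB]

lemma mul_eq_level_mul {E : Type*} {g x : E → ℝ} {L : ℝ} (hx : ∀ e, 0 ≤ x e)
    (hsupp : ∀ e, 0 < x e → g e = L) (e : E) : g e * x e = L * x e := by
  rcases (hx e).eq_or_lt with h | h
  · simp [← h]
  · rw [hsupp e h]

noncomputable def comparisonFlow {E : Type*} (Q : ℝ) (x₁ y : E → ℝ) (e : E) : ℝ :=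
  y e - min (y e) (2 * x₁ e) + Q * y e

lemma comparisonFlow_nonneg {E : Type*} {Q : ℝ} {x₁ y : E → ℝ} (hQ : 0 ≤ Q)
    (hy : ∀ e, 0 ≤ y e) (e : E) : 0 ≤ comparisonFlow Q x₁ y e := by
  have := min_le_left (y e) (2 * x₁ e)
  have := mul_nonneg hQ (hy e)
  unfold comparisonFlow
  linarith

section FlowsOnResources

variable {E : Type*} [Fintype E]

/-- `∑ₑ ∫₀^{vₑ} (r aₑ t + cₑ) dt`, the Beckmann potential of the costs `t ↦ r aₑ t + cₑ`. -/
noncomputable def beckmann (r : ℝ) (a c v : E → ℝ) : ℝ :=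
  ∑ e, (r / 2 * a e * v e ^ 2 + c e * v e)

lemma exists_wardrop_level {g x : E → ℝ} (hg : ∀ e, 0 ≤ g e)
    (h : ∀ e f, 0 < x e → g e ≤ g f) :
    ∃ L, 0 ≤ L ∧ (∀ f, L ≤ g f) ∧ ∀ e, 0 < x e → g e = L := by
  by_cases hx : ∃ e₀, 0 < x e₀
  · obtain ⟨e₀, he₀⟩ := hx
    exact ⟨g e₀, hg e₀, fun f => h e₀ f he₀, fun e he => (h e e₀ he).antisymm (h e₀ e he₀)⟩
  · exact ⟨0, le_rfl, hg, fun e he => (hx ⟨e, he⟩).elim⟩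

lemma sum_mul_le_sum_mul_of_level {g x v : E → ℝ} {L : ℝ} (hL : 0 ≤ L) (hLg : ∀ e, L ≤ g e)
    (hsupp : ∀ e, 0 < x e → g e = L) (hx : ∀ e, 0 ≤ x e) (hv : ∀ e, 0 ≤ v e)
    (hxv : ∑ e, x e ≤ ∑ e, v e) :
    ∑ e, g e * x e ≤ ∑ e, g e * v e :=
  calc ∑ e, g e * x e = L * ∑ e, x e := by
        rw [Finset.mul_sum]
        exact Finset.sum_congr rfl fun e _ => mul_eq_level_mul hx hsupp e
    _ ≤ L * ∑ e, v e := mul_le_mul_of_nonneg_left hxv hL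
    _ ≤ ∑ e, g e * v e := by
        rw [Finset.mul_sum]
        exact Finset.sum_le_sum fun e _ => mul_le_mul_of_nonneg_right (hLg e) (hv e)

lemma beckmann_le_of_level {r L : ℝ} {a c x v : E → ℝ} (hra : ∀ e, 0 ≤ r * a e) (hL : 0 ≤ L)
    (hLg : ∀ e, L ≤ r * a e * x e + c e) (hsupp : ∀ e, 0 < x e → r * a e * x e + c e = L)
    (hx : ∀ e, 0 ≤ x e) (hv : ∀ e, 0 ≤ v e) (hxv : ∑ e, x e ≤ ∑ e, v e) :
    beckmann r a c x ≤ beckmann r a c v := by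
  have htangent := Finset.sum_le_sum fun e (_ : e ∈ univ) =>
    beckmann_tangent_le (c := c e) (x := x e) (v := v e) (hra e)
  have hgrad := sum_mul_le_sum_mul_of_level hL hLg hsupp hx hv hxv
  simp only [Finset.sum_add_distrib, mul_sub, Finset.sum_sub_distrib] at htangent
  unfold beckmann
  rw [Finset.sum_add_distrib, Finset.sum_add_distrib]
  linarith

lemma level_mul_sum_le {r L : ℝ} {a b X y : E → ℝ} (hr : 0 ≤ r) (ha : ∀ e, 0 ≤ a e)
    (hb : ∀ e, 0 ≤ b e) (hL : 0 ≤ L) (hX : ∀ e, 0 ≤ X e) (hy : ∀ e, 0 ≤ y e)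
    (hLX : ∀ e, L ≤ r * a e * X e + b e) (hXy : ∑ e, X e = ∑ e, y e) :
    L * ∑ e, y e ≤ 4 * r * ∑ e, a e * y e ^ 2 + 2 * ∑ e, b e * y e := by
  have h := Finset.sum_le_sum fun e (_ : e ∈ univ) =>
    level_mul_le hr (ha e) (hb e) hL (hX e) (hy e) (hLX e)
  rw [Finset.sum_add_distrib, Finset.sum_add_distrib, ← Finset.mul_sum, ← Finset.mul_sum,
    ← Finset.sum_div, ← Finset.mul_sum, hXy] at h
  linarith

lemma sum_le_sum_comparisonFlow {Q : ℝ} {x₀ x₁ y : E → ℝ}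
    (hQ : Q * ∑ e, y e = ∑ e, x₁ e) (hy : ∑ e, y e = ∑ e, x₀ e + ∑ e, x₁ e) :
    ∑ e, x₀ e ≤ ∑ e, comparisonFlow Q x₁ y e := by
  have hmin : ∑ e, min (y e) (2 * x₁ e) ≤ 2 * ∑ e, x₁ e := by
    rw [Finset.mul_sum]
    exact Finset.sum_le_sum fun e _ => min_le_right _ _
  simp only [comparisonFlow, Finset.sum_add_distrib, Finset.sum_sub_distrib, ← Finset.mul_sum]
  linarith

lemma beckmann_comparisonFlow_le {r Q L : ℝ} {a b x₁ y : E → ℝ} (hr : 0 ≤ r)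
    (ha : ∀ e, 0 ≤ a e) (hb : ∀ e, 0 ≤ b e) (hx₁ : ∀ e, 0 ≤ x₁ e) (hy : ∀ e, 0 ≤ y e)
    (hQ : 0 ≤ Q) (hL : ∀ e, r * a e * x₁ e ≤ L) :
    beckmann r a (fun e => b e + r * a e * x₁ e) (comparisonFlow Q x₁ y) ≤
      r / 2 * (1 + Q) ^ 2 * ∑ e, a e * y e ^ 2 + (1 + Q) * ∑ e, b e * y e +
        Q * L * ∑ e, y e := by
  have h := Finset.sum_le_sum fun e (_ : e ∈ univ) =>
    beckmann_comparison_le hr (ha e) (hb e) (hx₁ e) (hy e) hQ (hL e)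
  simpa only [beckmann, comparisonFlow, Finset.sum_add_distrib, ← Finset.mul_sum] using h

theorem two_class_cost_le {rj rk n₀ n₁ : ℝ} {a b x₀ x₁ y : E → ℝ} (ha : ∀ e, 0 ≤ a e)
    (hb : ∀ e, 0 ≤ b e) (hx₀ : ∀ e, 0 ≤ x₀ e) (hx₁ : ∀ e, 0 ≤ x₁ e) (hy : ∀ e, 0 ≤ y e)
    (hrj : 2 ≤ rj) (hrjk : rj ≤ rk) (hn₁ : 0 < n₁) (hsum₀ : ∑ e, x₀ e = n₀)
    (hsum₁ : ∑ e, x₁ e = n₁) (hsumy : ∑ e, y e = n₀ + n₁)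
    (hj : ∀ e f, 0 < x₀ e →
      rj * a e * (x₀ e + x₁ e) + b e ≤ rj * a f * (x₀ f + x₁ f) + b f)
    (hk : ∀ e f, 0 < x₁ e →
      rk * a e * (x₀ e + x₁ e) + b e ≤ rk * a f * (x₀ f + x₁ f) + b f) :
    ∑ e, (a e * (x₀ e + x₁ e) ^ 2 + b e * (x₀ e + x₁ e)) ≤
      (rj / 2 + n₁ / (n₀ + n₁) * 10 * rk) * ∑ e, (a e * y e ^ 2 + b e * y e) := by
  have hrj₀ : 0 ≤ rj := by linarith
  have hrk₀ : 0 ≤ rk := by linarith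
  have hX : ∀ e, 0 ≤ x₀ e + x₁ e := fun e => add_nonneg (hx₀ e) (hx₁ e)
  obtain ⟨Lj, hLj₀, hLj, hLj_supp⟩ := exists_wardrop_level
    (fun e => add_nonneg (mul_nonneg (mul_nonneg hrj₀ (ha e)) (hX e)) (hb e)) hj
  obtain ⟨Lk, hLk₀, hLk, hLk_supp⟩ := exists_wardrop_level
    (fun e => add_nonneg (mul_nonneg (mul_nonneg hrk₀ (ha e)) (hX e)) (hb e)) hk
  have hn₀ : 0 ≤ n₀ := hsum₀ ▸ Finset.sum_nonneg fun e _ => hx₀ e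
  have hn : 0 < n₀ + n₁ := by linarith
  set Q := n₁ / (n₀ + n₁)
  have hQ₀ : 0 ≤ Q := by positivity
  have hQ₁ : Q ≤ 1 := div_le_one_of_le₀ (by linarith) hn.le
  have hQn : Q * (n₀ + n₁) = n₁ := div_mul_cancel₀ _ hn.ne'
  set c := fun e => b e + rj * a e * x₁ e
  have hcost : ∑ e, (a e * (x₀ e + x₁ e) ^ 2 + b e * (x₀ e + x₁ e)) ≤
      beckmann rj a c x₀ + ∑ e, x₁ e * (a e * (x₀ e + x₁ e) + b e) := by
    rw [beckmann, ← Finset.sum_add_distrib]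
    exact Finset.sum_le_sum fun e _ => cost_le_beckmann_add hrj (ha e) (hx₀ e) (hx₁ e)
  have hpot : beckmann rj a c x₀ ≤ beckmann rj a c (comparisonFlow Q x₁ y) :=
    beckmann_le_of_level (fun e => mul_nonneg hrj₀ (ha e)) hLj₀
      (fun e => (hLj e).trans_eq (by simp only [c]; ring))
      (fun e he => Eq.trans (by simp only [c]; ring) (hLj_supp e he))
      hx₀ (comparisonFlow_nonneg hQ₀ hy)
      (sum_le_sum_comparisonFlow (by rw [hsumy, hQn, hsum₁]) (by rw [hsumy, hsum₀, hsum₁]))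
  have hcomp := beckmann_comparisonFlow_le (L := Lk) hrj₀ ha hb hx₁ hy hQ₀ fun e =>
    (mul_le_mul_of_nonneg_right (mul_le_mul_of_nonneg_right hrjk (ha e)) (hx₁ e)).trans
      (mul_le_level_of_support hrk₀ (ha e) (hb e) (hx₀ e) (hx₁ e) hLk₀ (hLk_supp e))
  have hclass₁ : ∑ e, x₁ e * (a e * (x₀ e + x₁ e) + b e) ≤ Lk * n₁ := by
    rw [← hsum₁, Finset.mul_sum]
    exact Finset.sum_le_sum fun e _ =>
      cost_mul_le_level_mul (by linarith) (ha e) (hx₀ e) (hx₁ e) (hLk_supp e)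
  have hlevel := level_mul_sum_le hrk₀ ha hb hLk₀ hX hy hLk (by
    rw [Finset.sum_add_distrib, hsum₀, hsum₁, hsumy])
  rw [hsumy] at hcomp hlevel
  have hQLk : Lk * n₁ = Q * (Lk * (n₀ + n₁)) := by rw [mul_left_comm, hQn]
  rw [Finset.sum_add_distrib (f := fun e => a e * y e ^ 2)]
  have hbound := two_class_bound_arith hrj hrjk hQ₀ hQ₁ (Finset.sum_nonneg fun e _ =>
    mul_nonneg (ha e) (sq_nonneg (y e))) (Finset.sum_nonneg fun e _ => mul_nonneg (hb e) (hy e))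
    hlevel
  linarith

end FlowsOnResources

namespace AffineNRG

variable {E ι : Type} [Fintype E] [DecidableEq E] [Fintype ι] {G : AffineNRG E ι}

lemma IsRSG.singleton_mem_paths (hG : G.IsRSG) (i : ι) (e : E) : {e} ∈ G.paths i := by
  rw [hG i]
  exact Finset.mem_image_of_mem _ (Finset.mem_univ e)

lemma IsRSG.filter_mem_paths (hG : G.IsRSG) (i : ι) (e : E) :
    (G.paths i).filter (fun f => e ∈ f) = {{e}} := by
  ext f
  simp only [hG i, Finset.mem_filter, Finset.mem_image, Finset.mem_univ, true_and,
    Finset.mem_singleton]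
  constructor
  · rintro ⟨⟨e', rfl⟩, he⟩
    rw [Finset.mem_singleton.1 he]
  · rintro rfl
    exact ⟨⟨e, rfl⟩, Finset.mem_singleton_self e⟩

lemma IsRSG.load_eq (hG : G.IsRSG) (s : ι → Finset E → ℝ) (e : E) :
    G.load s e = ∑ i, s i {e} := by
  simp only [load, hG.filter_mem_paths, Finset.sum_singleton]

lemma IsRSG.sum_singleton_eq_mass (hG : G.IsRSG) {s : ι → Finset E → ℝ} (hs : G.Feasible s)
    (i : ι) : ∑ e, s i {e} = G.mass i := by
  rw [← hs.2 i, hG i, Finset.sum_image fun e _ e' _ h => Finset.singleton_injective h]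

lemma IsRSG.wccEq_le (hG : G.IsRSG) {r : ι → ℝ} {s : ι → Finset E → ℝ} (hs : G.WCCEq r s)
    {i : ι} {e : E} (he : 0 < s i {e}) (f : E) :
    r i * G.a e * G.load s e + G.b e ≤ r i * G.a f * G.load s f + G.b f := by
  simpa using hs.2 i {e} (hG.singleton_mem_paths i e) {f} (hG.singleton_mem_paths i f) he

end AffineNRG

open AffineNRG in
/-- There is a universal constant `C > 0` such that in any affine resource selection game with
exactly two agent types `j = 0` and `k = 1`, uncertainty parameters `2 ≤ r_j < r_k` and masses
`n_j, n_k > 0` with `n = n_j + n_k`, every WCC equilibrium `s` for `(r_j, r_k)` satisfies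
`SC(s) ≤ (r_j/2 + (n_k/n)·C·r_k)·SC(sO)` for every feasible flow `sO`. -/
theorem stmt_5 : ∃ C : ℝ, 0 < C ∧
    ∀ (E : Type) [Fintype E] [DecidableEq E] [Nonempty E]
      (G : AffineNRG E (Fin 2)), G.IsRSG →
      ∀ rj rk : ℝ, 2 ≤ rj → rj < rk →
      0 < G.mass 0 → 0 < G.mass 1 →
      ∀ s, G.WCCEq (fun i => if i = 0 then rj else rk) s →
      ∀ sO, G.Feasible sO →
      G.SC s ≤ (rj / 2 + G.mass 1 / (G.mass 0 + G.mass 1) * C * rk) * G.SC sO := by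
  refine ⟨10, by norm_num, ?_⟩
  intro E _ _ _ G hG rj rk hrj hrjk _ hn₁ s hs sO hO
  have hload : ∀ t e, G.load t e = t 0 {e} + t 1 {e} := fun t e => by
    rw [hG.load_eq, Fin.sum_univ_two]
  simp only [SC, hload]
  refine two_class_cost_le G.a_nonneg G.b_nonneg (fun e => hs.1.1 0 {e}) (fun e => hs.1.1 1 {e})
    (fun e => add_nonneg (hO.1 0 {e}) (hO.1 1 {e})) hrj hrjk.le hn₁
    (hG.sum_singleton_eq_mass hs.1 0) (hG.sum_singleton_eq_mass hs.1 1)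
    (by rw [Finset.sum_add_distrib, hG.sum_singleton_eq_mass hO 0, hG.sum_singleton_eq_mass hO 1])
    (fun e f he => ?_) (fun e f he => ?_)
  · simpa [hload] using hG.wccEq_le hs he f
  · simpa [hload] using hG.wccEq_le hs he f
end

section
/- Let r ∈ [1, 2+√3] and set ρ = r + 1/r and q(r) = 16/(8ρ − ρ²). Then: (i) for every Pigou instance G_P(a, n) and every WCR equilibrium x ∈ [0, n] of G_P(a, n) with uncertainty r, SC(x) ≤ q(r)·min_{y∈[0,n]} SC(y); and (ii) there exist a > 0, n > 0 and a WCR equilibrium x of G_P(a, n) with uncertainty r such that SC(x) = q(r)·min_{y∈[0,n]} SC(y). -/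
/-- Social cost in the Pigou instance `G_P(a,n)`: a mass `x ∈ [0,n]` uses resource 2
(with cost `c₂(t) = a·t`) and a mass `n − x` uses resource 1 (with `c₁(t) = 1`), so
`SC(x) = (n − x) + a·x²`. -/
noncomputable def pigouSC (a n x : ℝ) : ℝ := (n - x) + a * x ^ 2

/-- Worst-case regret of resource 1 in `G_P(a,n)` under uncertainty `r`. -/
noncomputable def pigouWCR1 (a r x : ℝ) : ℝ := 1 - a * x / r

/-- Worst-case regret of resource 2 in `G_P(a,n)` under uncertainty `r`. -/
noncomputable def pigouWCR2 (a r x : ℝ) : ℝ := a * r * x - 1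

/-- `x ∈ [0,n]` is a WCR equilibrium of `G_P(a,n)` with uncertainty `r` iff
`(x < n → WCR₁(x) ≤ WCR₂(x))` and `(x > 0 → WCR₂(x) ≤ WCR₁(x))`. -/
def PigouWCREq (a n r x : ℝ) : Prop :=
  (x < n → pigouWCR1 a r x ≤ pigouWCR2 a r x) ∧
  (0 < x → pigouWCR2 a r x ≤ pigouWCR1 a r x)

/-- `x ∈ [0,n]` is a WCC equilibrium of `G_P(a,n)` with uncertainty `r` iff
`(x > 0 → a·r·x ≤ 1)` and `(x < n → a·r·x ≥ 1)`. -/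
def PigouWCCEq (a n r x : ℝ) : Prop :=
  (0 < x → a * r * x ≤ 1) ∧ (x < n → 1 ≤ a * r * x)

/-!
Writing `ρ = r + 1/r`, the two worst-case regrets differ by `a·x·ρ − 2`, so a WCR equilibrium
is `x = min(n, 2/(aρ))`. In the scaled variables `u = a·x`, `N = a·n` the social cost is
`(N − u + u²)/a`, and the optimum is at least `(N − 1/4)/a`, and `N²/a` when `N ≤ 1/2`.
The ratio `u²/(u − 1/4)` increases on `u ≥ 1/2` and equals `q(r)` at `u = 2/ρ`, which gives
both the bound and the tight instance `a = 1`, `n = x = 2/ρ`, optimum `y = 1/2`.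
-/

noncomputable def pigouPoA (ρ : ℝ) : ℝ := 16 / (8 * ρ - ρ ^ 2)

section PoA

variable {ρ : ℝ}

theorem one_le_pigouPoA (h0 : 0 < ρ) (h8 : ρ < 8) : 1 ≤ pigouPoA ρ := by
  rw [pigouPoA, le_div_iff₀ (by nlinarith)]
  nlinarith [sq_nonneg (ρ - 4)]

theorem sq_le_pigouPoA_mul {u : ℝ} (h0 : 0 < ρ) (hu : 1 / 2 ≤ u) (huρ : u * ρ ≤ 2) :
    u ^ 2 ≤ pigouPoA ρ * (u - 1 / 4) := by
  have hρ4 : ρ ≤ 4 := by nlinarith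
  have hD : 0 < 8 * ρ - ρ ^ 2 := by nlinarith
  rw [pigouPoA, div_mul_eq_mul_div, le_div_iff₀ hD]
  nlinarith [mul_nonneg (sub_nonneg.2 huρ)
    (add_nonneg (mul_nonneg (sub_nonneg.2 hu) (by linarith : (0 : ℝ) ≤ 8 - ρ))
      (by linarith : (0 : ℝ) ≤ (4 - ρ) / 2))]

end PoA

theorem add_one_div_le_four {r : ℝ} (hr1 : 1 ≤ r) (hr2 : r ≤ 2 + Real.sqrt 3) :
    r + 1 / r ≤ 4 := by
  have hs : Real.sqrt 3 ^ 2 = 3 := Real.sq_sqrt (by norm_num)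
  have hs1 : 1 ≤ Real.sqrt 3 := by nlinarith [Real.sqrt_nonneg 3]
  rw [← sub_nonneg, show 4 - (r + 1 / r) = -(r ^ 2 - 4 * r + 1) / r by field_simp; ring]
  apply div_nonneg _ (by linarith)
  nlinarith [mul_nonneg (show (0 : ℝ) ≤ 2 + Real.sqrt 3 - r by linarith)
    (show (0 : ℝ) ≤ Real.sqrt 3 + r - 2 by linarith)]

section Pigou

variable {a n r x y : ℝ}

theorem mul_pigouSC (a n x : ℝ) : a * pigouSC a n x = a * n - a * x + (a * x) ^ 2 := by
  rw [pigouSC]; ring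

theorem mul_sub_quarter_le_mul_pigouSC : a * n - 1 / 4 ≤ a * pigouSC a n y := by
  rw [mul_pigouSC]; nlinarith [sq_nonneg (a * y - 1 / 2)]

theorem sq_le_mul_pigouSC (ha : 0 ≤ a) (hyn : y ≤ n) (han : a * n ≤ 1 / 2) :
    (a * n) ^ 2 ≤ a * pigouSC a n y := by
  have hv : a * y ≤ a * n := mul_le_mul_of_nonneg_left hyn ha
  rw [mul_pigouSC]
  nlinarith [mul_nonneg (sub_nonneg.2 hv) (by linarith : (0 : ℝ) ≤ 1 - a * y - a * n)]

theorem pigouWCREq_iff :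
    PigouWCREq a n r x ↔
      (x < n → 2 ≤ a * x * (r + 1 / r)) ∧ (0 < x → a * x * (r + 1 / r) ≤ 2) := by
  have hρ : a * x * (r + 1 / r) = a * r * x + a * x / r := by ring
  simp only [PigouWCREq, pigouWCR1, pigouWCR2, hρ]
  constructor <;> rintro ⟨h₁, h₂⟩ <;>
    exact ⟨fun h => by linarith [h₁ h], fun h => by linarith [h₂ h]⟩

theorem pigouWCREq_self (h : a * n * (r + 1 / r) ≤ 2) : PigouWCREq a n r n :=
  pigouWCREq_iff.2 ⟨fun h' => absurd h' (lt_irrefl n), fun _ => h⟩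

theorem pigouSC_le_pigouPoA_mul (ha : 0 < a) (hn : 0 < n) (hr : 0 < r) (hρ : r + 1 / r ≤ 4)
    (hxn : x ≤ n) (hyn : y ≤ n) (heq : PigouWCREq a n r x) :
    pigouSC a n x ≤ pigouPoA (r + 1 / r) * pigouSC a n y := by
  set ρ := r + 1 / r
  have hρ0 : 0 < ρ := by positivity
  have hq1 : 1 ≤ pigouPoA ρ := one_le_pigouPoA hρ0 (by linarith)
  obtain ⟨hlow, hhigh⟩ := pigouWCREq_iff.1 heq
  have hx0 : 0 < x := by
    by_contra! hx
    nlinarith [hlow (hx.trans_lt hn), mul_nonpos_of_nonneg_of_nonpos ha.le hx]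
  have hux : a * x * ρ ≤ 2 := hhigh hx0
  refine le_of_mul_le_mul_left ?_ ha
  rw [mul_left_comm, mul_pigouSC]
  rcases hxn.lt_or_eq with hlt | rfl
  · have hu : a * x * ρ = 2 := le_antisymm hux (hlow hlt)
    have hsq := sq_le_pigouPoA_mul hρ0 (by nlinarith) hu.le
    have hux_le : a * x ≤ a * n := mul_le_mul_of_nonneg_left hxn ha.le
    calc a * n - a * x + (a * x) ^ 2
        ≤ pigouPoA ρ * (a * n - a * x) + pigouPoA ρ * (a * x - 1 / 4) := by
          nlinarith
      _ = pigouPoA ρ * (a * n - 1 / 4) := by ring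
      _ ≤ pigouPoA ρ * (a * pigouSC a n y) := by gcongr; exact mul_sub_quarter_le_mul_pigouSC
  · rw [sub_self, zero_add]
    rcases le_or_gt (a * x) (1 / 2) with hsmall | hlarge
    · calc (a * x) ^ 2 ≤ pigouPoA ρ * (a * x) ^ 2 := le_mul_of_one_le_left (sq_nonneg _) hq1
        _ ≤ pigouPoA ρ * (a * pigouSC a x y) := by
          gcongr; exact sq_le_mul_pigouSC ha.le hyn hsmall
    · calc (a * x) ^ 2 ≤ pigouPoA ρ * (a * x - 1 / 4) := sq_le_pigouPoA_mul hρ0 hlarge.le hux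
        _ ≤ pigouPoA ρ * (a * pigouSC a x y) := by gcongr; exact mul_sub_quarter_le_mul_pigouSC

end Pigou

theorem pigouSC_two_div_eq_pigouPoA_mul {ρ : ℝ} (h0 : ρ ≠ 0) (h8 : 8 - ρ ≠ 0) :
    pigouSC 1 (2 / ρ) (2 / ρ) = pigouPoA ρ * pigouSC 1 (2 / ρ) (1 / 2) := by
  rw [pigouSC, pigouSC, pigouPoA]
  field_simp
  ring

/-- For `r ∈ [1, 2+√3]` and `q(r) = 16/(8ρ − ρ²)` with `ρ = r + 1/r`:
(i) every WCR equilibrium of every Pigou instance has social cost at most `q(r)` times the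
optimal social cost; (ii) this bound is tight for some Pigou instance and WCR equilibrium. -/
theorem stmt_7 (r : ℝ) (hr1 : 1 ≤ r) (hr2 : r ≤ 2 + Real.sqrt 3) :
    (∀ a n x : ℝ, 0 < a → 0 < n → x ∈ Set.Icc 0 n → PigouWCREq a n r x →
      ∀ y ∈ Set.Icc (0 : ℝ) n,
        pigouSC a n x ≤ 16 / (8 * (r + 1 / r) - (r + 1 / r) ^ 2) * pigouSC a n y) ∧
    (∃ a n x : ℝ, 0 < a ∧ 0 < n ∧ x ∈ Set.Icc 0 n ∧ PigouWCREq a n r x ∧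
      ∃ y ∈ Set.Icc (0 : ℝ) n, (∀ z ∈ Set.Icc (0 : ℝ) n, pigouSC a n y ≤ pigouSC a n z) ∧
        pigouSC a n x = 16 / (8 * (r + 1 / r) - (r + 1 / r) ^ 2) * pigouSC a n y) := by
  have hr0 : 0 < r := by linarith
  have hρ4 : r + 1 / r ≤ 4 := add_one_div_le_four hr1 hr2
  have hρ0 : 0 < r + 1 / r := by positivity
  refine ⟨fun a n x ha hn hx heq y hy ↦
    pigouSC_le_pigouPoA_mul ha hn hr0 hρ4 hx.2 hy.2 heq, ?_⟩
  refine ⟨1, 2 / (r + 1 / r), 2 / (r + 1 / r), one_pos, by positivity,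
    ⟨by positivity, le_rfl⟩, pigouWCREq_self ?_, 1 / 2, ⟨by norm_num, ?_⟩, ?_,
    pigouSC_two_div_eq_pigouPoA_mul hρ0.ne' (by linarith)⟩
  · rw [one_mul, div_mul_cancel₀ _ hρ0.ne']
  · rw [le_div_iff₀ hρ0]; linarith
  · intro z _
    have h := mul_sub_quarter_le_mul_pigouSC (a := 1) (n := 2 / (r + 1 / r)) (y := z)
    rw [pigouSC]; linarith
end

section
/- Let r ∈ [1, 2] and set q(r) = 4/(4r − r²). Then: (i) for every Pigou instance G_P(a, n) and every WCC equilibrium x ∈ [0, n] of G_P(a, n) with uncertainty r, SC(x) ≤ q(r)·min_{y∈[0,n]} SC(y); and (ii) there exist a > 0, n > 0 and a WCC equilibrium x of G_P(a, n) with uncertainty r such that SC(x) = q(r)·min_{y∈[0,n]} SC(y). In particular, the worst-case price of anarchy over Pigou instances for WCC players with uncertainty r ∈ [1,2] equals 4/(4r − r²). -/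
/-!
A WCC equilibrium either sits at the interior point `a·r·x = 1` or sends the whole mass to
resource 2 with `a·r·n ≤ 1`. Completing the square bounds the optimum below by `n − 1/(4a)`,
and for `u = a·x ∈ [1/(4−r), 1/r]` the equilibrium cost is within the factor `4/(4r − r²)` of
that bound. The remaining equilibria, with `2·a·x < 1`, are of the second kind and optimal,
since the social cost decreases on `[0, n]` when `2·a·n ≤ 1`. Equality holds for `a = 1`,
`n = x = 1/r`, whose optimum is `y = 1/2`.
-/

lemma four_mul_mul_sub_one_le_pigouSC (a n y : ℝ) :
    4 * a * n - 1 ≤ a * (4 * pigouSC a n y) := by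
  unfold pigouSC
  nlinarith [sq_nonneg (2 * a * y - 1)]

lemma pigouSC_self_le {a n y : ℝ} (ha : 0 ≤ a) (han : 2 * a * n ≤ 1) (hyn : y ≤ n) :
    pigouSC a n n ≤ pigouSC a n y := by
  have hgap : pigouSC a n y - pigouSC a n n = (n - y) * (1 - a * (n + y)) := by
    unfold pigouSC; ring
  have hdecr : 0 ≤ 1 - a * (n + y) := by nlinarith
  nlinarith [mul_nonneg (sub_nonneg.2 hyn) hdecr]

lemma mul_pigouSC_le_four_mul_mul_sub_one {a n r x : ℝ} (ha : 0 ≤ a) (hxn : x ≤ n)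
    (hlow : 1 ≤ (4 - r) * (a * x)) (hup : a * r * x ≤ 1) :
    a * ((4 * r - r ^ 2) * pigouSC a n x) ≤ 4 * a * n - 1 := by
  have hgap : 4 * a * n - 1 - a * ((4 * r - r ^ 2) * pigouSC a n x) =
      (2 - r) ^ 2 * (a * (n - x)) + (1 - a * r * x) * ((4 - r) * (a * x) - 1) := by
    unfold pigouSC; ring
  nlinarith [mul_nonneg (sq_nonneg (2 - r)) (mul_nonneg ha (sub_nonneg.2 hxn)),
    mul_nonneg (sub_nonneg.2 hup) (sub_nonneg.2 hlow)]

lemma PigouWCCEq.le_one_and_eq_one_or_eq {a n r x : ℝ} (hn : 0 < n) (hx : x ∈ Set.Icc 0 n)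
    (h : PigouWCCEq a n r x) : a * r * x ≤ 1 ∧ (a * r * x = 1 ∨ x = n) := by
  obtain ⟨hpos, hlt⟩ := h
  have hx0 : 0 < x := by
    rcases hx.1.lt_or_eq with hx0 | rfl
    · exact hx0
    · exact absurd (hlt hn) (by simp)
  refine ⟨hpos hx0, ?_⟩
  rcases hx.2.lt_or_eq with hxn | hxn
  · exact .inl ((hpos hx0).antisymm (hlt hxn))
  · exact .inr hxn

lemma mul_pigouSC_le_of_pigouWCCEq {a n r x y : ℝ} (hr0 : 0 < r) (hr2 : r ≤ 2)
    (ha : 0 < a) (hn : 0 < n) (hx : x ∈ Set.Icc 0 n) (hxy : PigouWCCEq a n r x)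
    (hyn : y ≤ n) :
    (4 * r - r ^ 2) * pigouSC a n x ≤ 4 * pigouSC a n y := by
  have hax : 0 ≤ a * x := mul_nonneg ha.le hx.1
  obtain ⟨hup, hint | rfl⟩ := hxy.le_one_and_eq_one_or_eq hn hx
  · refine le_of_mul_le_mul_left ?_ ha
    refine (mul_pigouSC_le_four_mul_mul_sub_one ha.le hx.2 ?_ hup).trans
      (four_mul_mul_sub_one_le_pigouSC a n y)
    nlinarith
  rcases le_or_gt 1 (2 * (a * x)) with hhalf | hhalf
  · refine le_of_mul_le_mul_left ?_ ha
    refine (mul_pigouSC_le_four_mul_mul_sub_one ha.le le_rfl ?_ hup).trans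
      (four_mul_mul_sub_one_le_pigouSC a x y)
    nlinarith
  · have hSC : 0 ≤ pigouSC a x x := by simp only [pigouSC, sub_self, zero_add]; positivity
    calc (4 * r - r ^ 2) * pigouSC a x x ≤ 4 * pigouSC a x x := by nlinarith [sq_nonneg (r - 2)]
      _ ≤ 4 * pigouSC a x y := by gcongr; exact pigouSC_self_le ha.le (by linarith) hyn

lemma pigouSC_one_inv_inv (r : ℝ) (hr0 : 0 < r) (hr4 : r < 4) :
    pigouSC 1 r⁻¹ r⁻¹ = 4 / (4 * r - r ^ 2) * pigouSC 1 r⁻¹ (1 / 2) := by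
  have : 4 - r ≠ 0 := by linarith
  unfold pigouSC
  field_simp
  ring

/-- For `r ∈ [1,2]` and `q(r) = 4/(4r − r²)`:
(i) every WCC equilibrium of every Pigou instance has social cost at most `q(r)` times the
optimal social cost; (ii) this bound is tight for some Pigou instance and WCC equilibrium.
Hence the worst-case PoA over Pigou instances for WCC players with uncertainty `r ∈ [1,2]`
equals `4/(4r − r²)`. -/
theorem stmt_9 (r : ℝ) (hr1 : 1 ≤ r) (hr2 : r ≤ 2) :
    (∀ a n x : ℝ, 0 < a → 0 < n → x ∈ Set.Icc 0 n → PigouWCCEq a n r x →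
      ∀ y ∈ Set.Icc (0 : ℝ) n,
        pigouSC a n x ≤ 4 / (4 * r - r ^ 2) * pigouSC a n y) ∧
    (∃ a n x : ℝ, 0 < a ∧ 0 < n ∧ x ∈ Set.Icc 0 n ∧ PigouWCCEq a n r x ∧
      ∃ y ∈ Set.Icc (0 : ℝ) n, (∀ z ∈ Set.Icc (0 : ℝ) n, pigouSC a n y ≤ pigouSC a n z) ∧
        pigouSC a n x = 4 / (4 * r - r ^ 2) * pigouSC a n y) := by
  have hr0 : 0 < r := by linarith
  have hD : 0 < 4 * r - r ^ 2 := by nlinarith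
  refine ⟨fun a n x ha hn hx hxy y hy => ?_, ?_⟩
  · rw [div_mul_eq_mul_div, le_div_iff₀ hD, mul_comm]
    exact mul_pigouSC_le_of_pigouWCCEq hr0 hr2 ha hn hx hxy hy.2
  · have hhalf : (1 / 2 : ℝ) ≤ r⁻¹ := by rw [one_div]; gcongr
    refine ⟨1, r⁻¹, r⁻¹, one_pos, inv_pos.2 hr0, ⟨(inv_pos.2 hr0).le, le_rfl⟩,
      ⟨fun _ => by simp [hr0.ne'], fun h => absurd h (lt_irrefl _)⟩,
      1 / 2, ⟨by norm_num, hhalf⟩, fun z _ => ?_, pigouSC_one_inv_inv r hr0 (by linarith)⟩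
    have := four_mul_mul_sub_one_le_pigouSC 1 r⁻¹ z
    unfold pigouSC at this ⊢
    linarith
end

section
/- Let r ≥ 2 and set q(r) = r²/(4(r − 1)). Then: (i) for every Pigou instance G_P(a, n) and every WCC equilibrium x ∈ [0, n] of G_P(a, n) with uncertainty r, SC(x) ≤ q(r)·min_{y∈[0,n]} SC(y); and (ii) there exist a > 0, n > 0 and a WCC equilibrium x of G_P(a, n) with uncertainty r such that SC(x) = q(r)·min_{y∈[0,n]} SC(y). In particular, the worst-case price of anarchy over Pigou instances for WCC players with uncertainty r ≥ 2 equals r²/(4(r − 1)). -/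
theorem one_le_sq_div_four_mul_sub_one {r : ℝ} (hr : 1 < r) : 1 ≤ r ^ 2 / (4 * (r - 1)) := by
  rw [le_div_iff₀ (by linarith)]
  nlinarith [sq_nonneg (r - 2)]

theorem pigouSC_nonneg {a n y : ℝ} (ha : 0 ≤ a) (hy : y ≤ n) : 0 ≤ pigouSC a n y := by
  unfold pigouSC
  nlinarith [mul_nonneg ha (sq_nonneg y)]

theorem pigouSC_sub_pigouSC (a n y z : ℝ) :
    pigouSC a n y - pigouSC a n z = (z - y) * (1 - a * (y + z)) := by
  unfold pigouSC
  ring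

theorem pigouSC_right_le {a n z : ℝ} (ha : 0 ≤ a) (han : 2 * a * n ≤ 1) (hz : z ≤ n) :
    pigouSC a n n ≤ pigouSC a n z := by
  have haz : a * z ≤ a * n := mul_le_mul_of_nonneg_left hz ha
  rw [← sub_nonneg, pigouSC_sub_pigouSC]
  exact mul_nonneg (by linarith) (by linarith)

theorem pigouWCCEq_of_mul_eq_one {a n r x : ℝ} (h : a * r * x = 1) : PigouWCCEq a n r x :=
  ⟨fun _ => h.le, fun _ => h.ge⟩

theorem PigouWCCEq.eq_right_or_mul_eq_one {a n r x : ℝ} (h : PigouWCCEq a n r x) (hn : 0 < n)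
    (hx0 : 0 ≤ x) (hxn : x ≤ n) : (x = n ∧ a * r * n ≤ 1) ∨ a * r * x = 1 := by
  rcases hxn.lt_or_eq with hlt | rfl
  · have hge := h.2 hlt
    have hpos : 0 < x := hx0.lt_of_ne (by rintro rfl; simp at hge; linarith)
    exact Or.inr ((h.1 hpos).antisymm hge)
  · exact Or.inl ⟨rfl, h.1 hn⟩

theorem pigouSC_le_of_mul_eq_one {a n r x y : ℝ} (ha : 0 < a) (hr : 1 < r) (hx : a * r * x = 1)
    (hy : y ≤ n) : pigouSC a n x ≤ r ^ 2 / (4 * (r - 1)) * pigouSC a n y := by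
  have sos : a * r ^ 2 * (r ^ 2 * pigouSC a n y - 4 * (r - 1) * pigouSC a n x) =
      a * r ^ 2 * (r - 2) ^ 2 * (n - y) + (a * r ^ 2 * y - 2 * (r - 1)) ^ 2 := by
    unfold pigouSC
    linear_combination 4 * (r - 1) * (r - a * r * x - 1) * hx
  have hgap : 0 ≤ r ^ 2 * pigouSC a n y - 4 * (r - 1) * pigouSC a n x := by
    refine (mul_nonneg_iff_of_pos_left (by positivity : 0 < a * r ^ 2)).mp ?_
    rw [sos]
    have : 0 ≤ n - y := sub_nonneg.mpr hy
    positivity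
  rw [div_mul_eq_mul_div, le_div_iff₀ (by linarith)]
  linarith

theorem pigouSC_le_of_pigouWCCEq {a n r x y : ℝ} (hr : 2 ≤ r) (ha : 0 < a) (hn : 0 < n)
    (hx : x ∈ Set.Icc 0 n) (hxeq : PigouWCCEq a n r x) (hy : y ∈ Set.Icc 0 n) :
    pigouSC a n x ≤ r ^ 2 / (4 * (r - 1)) * pigouSC a n y := by
  rcases hxeq.eq_right_or_mul_eq_one hn hx.1 hx.2 with ⟨rfl, harn⟩ | harx
  · have han : 2 * a * x ≤ 1 := by nlinarith [mul_pos ha hn]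
    calc pigouSC a x x ≤ pigouSC a x y := pigouSC_right_le ha.le han hy.2
      _ ≤ r ^ 2 / (4 * (r - 1)) * pigouSC a x y :=
        le_mul_of_one_le_left (pigouSC_nonneg ha.le hy.2)
          (one_le_sq_div_four_mul_sub_one (by linarith))
  · exact pigouSC_le_of_mul_eq_one ha (by linarith) harx hy.2

/-- For `r ≥ 2` and `q(r) = r²/(4(r − 1))`:
(i) every WCC equilibrium of every Pigou instance has social cost at most `q(r)` times the
optimal social cost; (ii) this bound is tight for some Pigou instance and WCC equilibrium.
Hence the worst-case PoA over Pigou instances for WCC players with uncertainty `r ≥ 2`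
equals `r²/(4(r − 1))`. -/
theorem stmt_10 (r : ℝ) (hr : 2 ≤ r) :
    (∀ a n x : ℝ, 0 < a → 0 < n → x ∈ Set.Icc 0 n → PigouWCCEq a n r x →
      ∀ y ∈ Set.Icc (0 : ℝ) n,
        pigouSC a n x ≤ r ^ 2 / (4 * (r - 1)) * pigouSC a n y) ∧
    (∃ a n x : ℝ, 0 < a ∧ 0 < n ∧ x ∈ Set.Icc 0 n ∧ PigouWCCEq a n r x ∧
      ∃ y ∈ Set.Icc (0 : ℝ) n, (∀ z ∈ Set.Icc (0 : ℝ) n, pigouSC a n y ≤ pigouSC a n z) ∧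
        pigouSC a n x = r ^ 2 / (4 * (r - 1)) * pigouSC a n y) := by
  refine ⟨fun a n x ha hn hx hxeq y hy => pigouSC_le_of_pigouWCCEq hr ha hn hx hxeq hy, ?_⟩
  have hr1 : 0 < r - 1 := by linarith
  have hn_half : 2 * (r - 1) / r ^ 2 ≤ 1 / 2 := by
    rw [div_le_div_iff₀ (by positivity) two_pos]
    nlinarith [sq_nonneg (r - 2)]
  have hxn : 1 / r ≤ 2 * (r - 1) / r ^ 2 := by
    rw [div_le_div_iff₀ (by positivity) (by positivity)]
    nlinarith
  have hxeq : 1 * r * (1 / r) = 1 := by field_simp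
  refine ⟨1, 2 * (r - 1) / r ^ 2, 1 / r, one_pos, by positivity, ⟨by positivity, hxn⟩,
    pigouWCCEq_of_mul_eq_one hxeq, 2 * (r - 1) / r ^ 2, ⟨by positivity, le_rfl⟩,
    fun z hz => pigouSC_right_le zero_le_one (by linarith) hz.2, ?_⟩
  unfold pigouSC
  field_simp
  ring
end

section
/- There exists a resource selection game with a set E of 3 resources, nondecreasing continuous cost functions c_e, finitely many agent types i with masses n_i > 0 and uncertainty parameters r_i ≥ 1, together with a finite sequence of states s⁰, s¹, …, s^T with T ≥ 2, s^T = s⁰ and s¹ ≠ s⁰, such that for each t < T the state s^{t+1} is obtained from s^t by moving a positive mass of agents of a single type i from a resource e (carrying positive mass of type i in s^t) to a resource d ≠ e, and this move is improving for the movers under worst-case cost: c_d(r_i·s̄^{t+1}_d) < c_e(r_i·s̄^t_e). That is, best-response dynamics of WCC players with heterogeneous uncertainty levels can cycle. -/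
open Finset

/-!
Two agent types of unit mass on three resources, the first with uncertainty `r = 1`, the second
with `r = 2`. Every state of the cycle is pure (each type sits entirely on one resource), and the
two types alternately chase each other around the resources. The cost functions are clamped ramps
chosen so that each move is improving for the mover, which is possible because the
second type perceives every load doubled: the same resource looks cheap to one type and expensive
to the other, so no common potential can decrease along the cycle.
-/

section PureStates

variable {ι E : Type*} [DecidableEq E]

def pureState (σ : ι → E) (i : ι) (e : E) : ℝ := if σ i = e then 1 else 0

lemma pureState_nonneg (σ : ι → E) (i : ι) (e : E) : 0 ≤ pureState σ i e := by
  unfold pureState; split_ifs <;> norm_num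

lemma sum_pureState [Fintype E] (σ : ι → E) (i : ι) : ∑ e, pureState σ i e = 1 := by
  simp [pureState]

lemma exists_improving_move_of_deviation [Fintype ι] (c : E → ℝ → ℝ) (r : ι → ℝ)
    {σ σ' : ι → E} (i : ι) (hmove : σ i ≠ σ' i) (hfix : ∀ j ≠ i, σ' j = σ j)
    (hcost : c (σ' i) (r i * ∑ j, pureState σ' j (σ' i)) <
      c (σ i) (r i * ∑ j, pureState σ j (σ i))) :
    ∃ (i : ι) (e d : E) (ε : ℝ), e ≠ d ∧ 0 < ε ∧ ε ≤ pureState σ i e ∧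
      pureState σ' i e = pureState σ i e - ε ∧
      pureState σ' i d = pureState σ i d + ε ∧
      (∀ (i' : ι) (e' : E), (i' ≠ i ∨ (e' ≠ e ∧ e' ≠ d)) →
        pureState σ' i' e' = pureState σ i' e') ∧
      c d (r i * ∑ i', pureState σ' i' d) < c e (r i * ∑ i', pureState σ i' e) := by
  refine ⟨i, σ i, σ' i, 1, hmove, one_pos, by simp [pureState], ?_, ?_, ?_, hcost⟩
  · simp [pureState, Ne.symm hmove]
  · simp [pureState, hmove]
  · rintro i' e' (hi' | ⟨he, hd⟩)
    · rw [pureState, pureState, hfix i' hi']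
    · obtain rfl | hi' := eq_or_ne i' i
      · simp [pureState, Ne.symm he, Ne.symm hd]
      · rw [pureState, pureState, hfix i' hi']

end PureStates

def ramp (a b x : ℝ) : ℝ := max 0 (min (x - a) b)

lemma monotone_ramp (a b : ℝ) : Monotone (ramp a b) :=
  fun _ _ hxy => max_le_max le_rfl (min_le_min_right b (sub_le_sub_right hxy a))

lemma continuous_ramp (a b : ℝ) : Continuous (ramp a b) := by
  unfold ramp; fun_prop

noncomputable def cycleCost : Fin 3 → ℝ → ℝ :=
  ![fun x => 0 + 3 * ramp 1 1 x,
    fun x => 2 + 2 * ramp 1 1 x,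
    fun x => 1 + 2 * ramp 2 2 x]

lemma monotone_cycleCost (e : Fin 3) : Monotone (cycleCost e) := by
  fin_cases e <;>
    exact ((monotone_ramp _ _).const_mul (by norm_num)).const_add _

lemma continuous_cycleCost (e : Fin 3) : Continuous (cycleCost e) := by
  fin_cases e <;> exact continuous_const.add (continuous_const.mul (continuous_ramp _ _))

def cycleUncertainty : Fin 2 → ℝ := ![1, 2]

def cycleProfile : ℕ → Fin 2 → Fin 3
  | 1 => ![1, 0]
  | 2 => ![1, 2]
  | 3 => ![2, 2]
  | 4 => ![2, 1]
  | 5 => ![0, 1]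
  | _ => ![0, 0]

def cycleMover (t : ℕ) : Fin 2 := if t % 2 = 0 then 0 else 1

lemma cycleProfile_mover_ne {t : ℕ} (ht : t < 6) :
    cycleProfile t (cycleMover t) ≠ cycleProfile (t + 1) (cycleMover t) := by
  interval_cases t <;> decide

lemma cycleProfile_succ_of_ne_mover {t : ℕ} (ht : t < 6) :
    ∀ j ≠ cycleMover t, cycleProfile (t + 1) j = cycleProfile t j := by
  interval_cases t <;> decide

lemma cycleCost_mover_lt {t : ℕ} (ht : t < 6) :
    let σ := cycleProfile t; let σ' := cycleProfile (t + 1); let i := cycleMover t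
    cycleCost (σ' i) (cycleUncertainty i * ∑ j, pureState σ' j (σ' i)) <
      cycleCost (σ i) (cycleUncertainty i * ∑ j, pureState σ j (σ i)) := by
  simp only [Fin.sum_univ_two]
  interval_cases t <;> norm_num [cycleCost, cycleUncertainty, cycleProfile, cycleMover, pureState, ramp,
    Matrix.cons_val_two, Fin.ext_iff]

/-- Best-response dynamics of worst-case-cost players with heterogeneous uncertainty levels
can cycle: there is a resource selection game on 3 resources with nondecreasing continuous
cost functions, finitely many agent types with positive masses and uncertainty parameters
`r_i ≥ 1`, and a cyclic sequence of states `s⁰, s¹, …, s^T = s⁰` (with `T ≥ 2`, `s¹ ≠ s⁰`),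
where each step moves a positive mass of agents of a single type from one resource to
another, strictly decreasing the movers' worst-case cost `c_e(r_i·s̄_e)`. -/
theorem stmt_11 :
    ∃ (m : ℕ) (c : Fin 3 → ℝ → ℝ) (mass : Fin m → ℝ) (r : Fin m → ℝ)
      (T : ℕ) (s : ℕ → Fin m → Fin 3 → ℝ),
      0 < m ∧
      (∀ e, Monotone (c e)) ∧ (∀ e, Continuous (c e)) ∧
      (∀ i, 0 < mass i) ∧ (∀ i, 1 ≤ r i) ∧
      2 ≤ T ∧ s T = s 0 ∧ s 1 ≠ s 0 ∧
      (∀ t ≤ T, ∀ i e, 0 ≤ s t i e) ∧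
      (∀ t ≤ T, ∀ i, ∑ e, s t i e = mass i) ∧
      (∀ t < T, ∃ (i : Fin m) (e d : Fin 3) (ε : ℝ),
        e ≠ d ∧ 0 < ε ∧ ε ≤ s t i e ∧
        s (t + 1) i e = s t i e - ε ∧
        s (t + 1) i d = s t i d + ε ∧
        (∀ (i' : Fin m) (e' : Fin 3), (i' ≠ i ∨ (e' ≠ e ∧ e' ≠ d)) →
          s (t + 1) i' e' = s t i' e') ∧
        c d (r i * ∑ i', s (t + 1) i' d) < c e (r i * ∑ i', s t i' e)) := by
  have hr : ∀ i, 1 ≤ cycleUncertainty i := by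
    intro i; fin_cases i <;> norm_num [cycleUncertainty]
  have hs₁ : pureState (cycleProfile 1) ≠ pureState (cycleProfile 0) := fun h => by
    simpa [pureState, cycleProfile] using congrFun (congrFun h 0) 0
  refine ⟨2, cycleCost, fun _ => 1, cycleUncertainty, 6, fun t => pureState (cycleProfile t),
    two_pos, monotone_cycleCost, continuous_cycleCost, fun _ => one_pos, hr, by norm_num, rfl,
    hs₁, fun t _ => pureState_nonneg _, fun t _ => sum_pureState _, fun t ht => ?_⟩
  exact exists_improving_move_of_deviation _ _ _ (cycleProfile_mover_ne ht)
    (cycleProfile_succ_of_ne_mover ht) (cycleCost_mover_lt ht)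
end

section
/- Let G be a nonatomic routing game with finite edge set E, continuous nondecreasing cost functions c_e : ℝ_{≥0} → ℝ_{≥0}, finitely many types i with path sets A_i and masses n_i ≥ 0, and let r ≥ 1. Define Φ^r(s) = Σ_{e∈E} ∫_0^{s̄_e} c_e(r·t) dt for a feasible flow s with loads s̄. Then a feasible flow s is a WCC equilibrium of G for homogeneous uncertainty r if and only if s minimizes Φ^r over all feasible flows of G. -/
open Finset

namespace Stmt14

variable {E ι : Type} [Fintype E] [DecidableEq E] [Fintype ι]

/-- The load induced on edge `e` by flow `s`. -/
def load (paths : ι → Finset (Finset E)) (s : ι → Finset E → ℝ) (e : E) : ℝ :=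
  ∑ i, ∑ f ∈ (paths i).filter (fun f => e ∈ f), s i f

/-- A feasible flow assigns a nonnegative amount to each path of each type,
with the amounts of type `i` summing to `mass i`. -/
def Feasible (paths : ι → Finset (Finset E)) (mass : ι → ℝ)
    (s : ι → Finset E → ℝ) : Prop :=
  (∀ i f, 0 ≤ s i f) ∧ ∀ i, ∑ f ∈ paths i, s i f = mass i

/-- The potential of the modified game: `Φ^r(s) = Σ_e ∫_0^{s̄_e} c_e(r·t) dt`. -/
noncomputable def Pot (paths : ι → Finset (Finset E)) (c : E → ℝ → ℝ) (r : ℝ)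
    (s : ι → Finset E → ℝ) : ℝ :=
  ∑ e, ∫ t in (0 : ℝ)..(load paths s e), c e (r * t)

/-- `s` is a WCC equilibrium for homogeneous uncertainty `r`: it is feasible and every used
path of each type has worst-case cost `Σ_{e∈f} c_e(r·s̄_e)` no larger than any alternative
path of the same type. -/
def WCCEq (paths : ι → Finset (Finset E)) (mass : ι → ℝ) (c : E → ℝ → ℝ) (r : ℝ)
    (s : ι → Finset E → ℝ) : Prop :=
  Feasible paths mass s ∧ ∀ i, ∀ f₁ ∈ paths i, ∀ f₂ ∈ paths i, 0 < s i f₁ →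
    ∑ e ∈ f₁, c e (r * load paths s e) ≤ ∑ e ∈ f₂, c e (r * load paths s e)

lemma aux_intInt {g : ℝ → ℝ} (hg : MonotoneOn g (Set.Ici 0)) {a b : ℝ}
    (ha : 0 ≤ a) (hb : 0 ≤ b) : IntervalIntegrable g MeasureTheory.volume a b := by
  apply MonotoneOn.intervalIntegrable
  apply hg.mono
  rw [Set.uIcc]
  intro x hx
  exact le_trans (le_inf ha hb) hx.1

lemma aux_integral_ge_left {g : ℝ → ℝ} (hg : MonotoneOn g (Set.Ici 0)) {a b : ℝ}
    (ha : 0 ≤ a) (hb : 0 ≤ b) : g a * (b - a) ≤ ∫ t in a..b, g t := by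
  rcases le_total a b with hab | hab
  · have h1 : ∫ t in a..b, (fun _ => g a) t ≤ ∫ t in a..b, g t := by
      apply intervalIntegral.integral_mono_on hab intervalIntegrable_const
        (aux_intInt hg ha hb)
      intro x hx
      exact hg (Set.mem_Ici.2 ha) (Set.mem_Ici.2 (le_trans ha hx.1)) hx.1
    simpa [intervalIntegral.integral_const, mul_comm, smul_eq_mul] using h1
  · have h1 : ∫ t in b..a, g t ≤ ∫ t in b..a, (fun _ => g a) t := by
      apply intervalIntegral.integral_mono_on hab (aux_intInt hg hb ha)
        intervalIntegrable_const
      intro x hx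
      exact hg (Set.mem_Ici.2 (le_trans hb hx.1)) (Set.mem_Ici.2 ha) hx.2
    rw [intervalIntegral.integral_symm b a]
    simp only [intervalIntegral.integral_const, smul_eq_mul] at h1
    nlinarith [h1]

lemma aux_integral_le_right {g : ℝ → ℝ} (hg : MonotoneOn g (Set.Ici 0)) {a b : ℝ}
    (ha : 0 ≤ a) (hab : a ≤ b) : ∫ t in a..b, g t ≤ g b * (b - a) := by
  have hb : 0 ≤ b := le_trans ha hab
  have h1 : ∫ t in a..b, g t ≤ ∫ t in a..b, (fun _ => g b) t := by
    apply intervalIntegral.integral_mono_on hab (aux_intInt hg ha hb)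
      intervalIntegrable_const
    intro x hx
    exact hg (Set.mem_Ici.2 (le_trans ha hx.1)) (Set.mem_Ici.2 hb) hx.2
  simpa [intervalIntegral.integral_const, mul_comm, smul_eq_mul] using h1

/-- In a nonatomic routing game with continuous nondecreasing nonnegative costs, a feasible
flow is a WCC equilibrium for homogeneous uncertainty `r` iff it minimizes the potential
`Φ^r(s) = Σ_e ∫_0^{s̄_e} c_e(r·t) dt` over all feasible flows. -/
theorem stmt_14 {E ι : Type} [Fintype E] [DecidableEq E] [Fintype ι]
    (c : E → ℝ → ℝ)
    (hc_cont : ∀ e, ContinuousOn (c e) (Set.Ici 0))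
    (hc_mono : ∀ e, MonotoneOn (c e) (Set.Ici 0))
    (hc_nonneg : ∀ e t, 0 ≤ t → 0 ≤ c e t)
    (paths : ι → Finset (Finset E))
    (hpaths : ∀ i, (paths i).Nonempty)
    (hpaths_mem : ∀ i, ∀ f ∈ paths i, f.Nonempty)
    (mass : ι → ℝ) (hmass : ∀ i, 0 ≤ mass i)
    (r : ℝ) (hr : 1 ≤ r)
    (s : ι → Finset E → ℝ) (hs : Feasible paths mass s) :
    WCCEq paths mass c r s ↔
      ∀ s', Feasible paths mass s' → Pot paths c r s ≤ Pot paths c r s' := by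
  classical
  obtain ⟨hs_nonneg, hs_sum⟩ := hs
  have hr0 : (0:ℝ) < r := lt_of_lt_of_le one_pos hr
  have hmono : ∀ e, MonotoneOn (fun t => c e (r * t)) (Set.Ici 0) := by
    intro e x hx y hy hxy
    exact hc_mono e (Set.mem_Ici.2 (mul_nonneg hr0.le hx))
      (Set.mem_Ici.2 (mul_nonneg hr0.le hy)) (mul_le_mul_of_nonneg_left hxy hr0.le)
  have hload_nonneg : ∀ (σ : ι → Finset E → ℝ), (∀ i f, 0 ≤ σ i f) →
      ∀ e, 0 ≤ load paths σ e := by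
    intro σ hσ e
    apply Finset.sum_nonneg; intro i _
    apply Finset.sum_nonneg; intro f _
    exact hσ i f
  have hLn : ∀ e, 0 ≤ load paths s e := hload_nonneg s hs_nonneg
  have hPotDiff : ∀ (σ : ι → Finset E → ℝ), (∀ i f, 0 ≤ σ i f) →
      Pot paths c r σ - Pot paths c r s
        = ∑ e, ∫ t in (load paths s e)..(load paths σ e), c e (r * t) := by
    intro σ hσ
    unfold Pot
    rw [← Finset.sum_sub_distrib]
    refine Finset.sum_congr rfl (fun e _ => ?_)
    exact intervalIntegral.integral_interval_sub_left
      (aux_intInt (hmono e) le_rfl (hload_nonneg σ hσ e))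
      (aux_intInt (hmono e) le_rfl (hLn e))
  have hswap : ∀ (w : E → ℝ) (σ : ι → Finset E → ℝ),
      ∑ e, w e * load paths σ e = ∑ i, ∑ f ∈ paths i, σ i f * ∑ e ∈ f, w e := by
    intro w σ
    unfold load
    simp_rw [Finset.mul_sum, Finset.sum_filter]
    rw [Finset.sum_comm]
    refine Finset.sum_congr rfl (fun i _ => ?_)
    rw [Finset.sum_comm]
    refine Finset.sum_congr rfl (fun f _ => ?_)
    rw [Finset.sum_ite_mem, Finset.univ_inter]
    exact Finset.sum_congr rfl fun e _ => mul_comm _ _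
  constructor
  · -- equilibrium → minimizer
    rintro ⟨-, heq⟩ s' hs'
    obtain ⟨hs'_nonneg, hs'_sum⟩ := hs'
    have hL'n : ∀ e, 0 ≤ load paths s' e := hload_nonneg s' hs'_nonneg
    have h1 : ∑ e, c e (r * load paths s e) * (load paths s' e - load paths s e)
        ≤ ∑ e, ∫ t in (load paths s e)..(load paths s' e), c e (r * t) :=
      Finset.sum_le_sum fun e _ => aux_integral_ge_left (hmono e) (hLn e) (hL'n e)
    have hA : ∑ e, c e (r * load paths s e) * load paths s' e
        = ∑ i, ∑ f ∈ paths i, s' i f * ∑ e ∈ f, c e (r * load paths s e) :=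
      hswap (fun e => c e (r * load paths s e)) s'
    have hB : ∑ e, c e (r * load paths s e) * load paths s e
        = ∑ i, ∑ f ∈ paths i, s i f * ∑ e ∈ f, c e (r * load paths s e) :=
      hswap (fun e => c e (r * load paths s e)) s
    have h2 : 0 ≤ ∑ e, c e (r * load paths s e) * (load paths s' e - load paths s e) := by
      simp_rw [mul_sub]
      rw [Finset.sum_sub_distrib, hA, hB, sub_nonneg]
      apply Finset.sum_le_sum
      intro i _
      have hcost_nonneg : ∀ f : Finset E, 0 ≤ ∑ e ∈ f, c e (r * load paths s e) :=
        fun f => Finset.sum_nonneg fun e _ => hc_nonneg e _ (mul_nonneg hr0.le (hLn e))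
      by_cases hex : ∃ f₀ ∈ paths i, 0 < s i f₀
      · obtain ⟨f₀, hf₀, hf₀pos⟩ := hex
        have h2a : ∑ f ∈ paths i, s i f * ∑ e ∈ f, c e (r * load paths s e)
            ≤ ∑ f ∈ paths i, s i f * ∑ e ∈ f₀, c e (r * load paths s e) := by
          apply Finset.sum_le_sum; intro f hf
          rcases lt_or_eq_of_le (hs_nonneg i f) with hpos | h0
          · exact mul_le_mul_of_nonneg_left (heq i f hf f₀ hf₀ hpos) hpos.le
          · rw [← h0, zero_mul, zero_mul]
        have h2b : ∑ f ∈ paths i, s' i f * ∑ e ∈ f₀, c e (r * load paths s e)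
            ≤ ∑ f ∈ paths i, s' i f * ∑ e ∈ f, c e (r * load paths s e) := by
          apply Finset.sum_le_sum; intro f hf
          exact mul_le_mul_of_nonneg_left (heq i f₀ hf₀ f hf hf₀pos) (hs'_nonneg i f)
        have h2c : ∑ f ∈ paths i, s i f * ∑ e ∈ f₀, c e (r * load paths s e)
            = ∑ f ∈ paths i, s' i f * ∑ e ∈ f₀, c e (r * load paths s e) := by
          rw [← Finset.sum_mul, ← Finset.sum_mul, hs_sum i, hs'_sum i]
        linarith
      · push_neg at hex
        have hz : ∀ f ∈ paths i, s i f = 0 :=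
          fun f hf => le_antisymm (hex f hf) (hs_nonneg i f)
        rw [Finset.sum_congr rfl (fun f hf => by rw [hz f hf, zero_mul])]
        rw [Finset.sum_const_zero]
        exact Finset.sum_nonneg fun f _ => mul_nonneg (hs'_nonneg i f) (hcost_nonneg f)
    have hd := hPotDiff s' hs'_nonneg
    linarith
  · -- minimizer → equilibrium
    intro hmin
    refine ⟨⟨hs_nonneg, hs_sum⟩, ?_⟩
    intro i f₁ hf₁ f₂ hf₂ hpos
    by_contra hcon
    push_neg at hcon
    have hne : f₁ ≠ f₂ := by
      rintro rfl; exact lt_irrefl _ hcon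
    have hLf₁ : ∀ e ∈ f₁, s i f₁ ≤ load paths s e := by
      intro e he
      have h1 : s i f₁ ≤ ∑ f ∈ (paths i).filter (fun f => e ∈ f), s i f :=
        Finset.single_le_sum (fun f _ => hs_nonneg i f) (Finset.mem_filter.2 ⟨hf₁, he⟩)
      unfold load
      exact le_trans h1 (Finset.single_le_sum
        (f := fun j => ∑ f ∈ (paths j).filter (fun f => e ∈ f), s j f)
        (fun j _ => Finset.sum_nonneg fun f _ => hs_nonneg j f) (Finset.mem_univ i))
    set g : ℝ → ℝ := fun ε => (∑ e ∈ f₂ \ f₁, c e (r * (load paths s e + ε))) -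
      ∑ e ∈ f₁ \ f₂, c e (r * (load paths s e - ε)) with hg
    have hg0 : g 0 < 0 := by
      have e2 : (∑ e ∈ f₂ \ f₁, c e (r * load paths s e))
          + ∑ e ∈ f₂ ∩ f₁, c e (r * load paths s e)
          = ∑ e ∈ f₂, c e (r * load paths s e) := by
        rw [← Finset.sdiff_inter_self_left f₂ f₁]
        exact Finset.sum_sdiff Finset.inter_subset_left
      have e1 : (∑ e ∈ f₁ \ f₂, c e (r * load paths s e))
          + ∑ e ∈ f₁ ∩ f₂, c e (r * load paths s e)
          = ∑ e ∈ f₁, c e (r * load paths s e) := by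
        rw [← Finset.sdiff_inter_self_left f₁ f₂]
        exact Finset.sum_sdiff Finset.inter_subset_left
      have e3 : (∑ e ∈ f₂ ∩ f₁, c e (r * load paths s e))
          = ∑ e ∈ f₁ ∩ f₂, c e (r * load paths s e) := by
        rw [Finset.inter_comm]
      simp only [hg, add_zero, sub_zero]
      linarith
    have hm0 : 0 < s i f₁ := hpos
    have hgc : ContinuousOn g (Set.Icc 0 (s i f₁)) := by
      apply ContinuousOn.sub
      · apply continuousOn_finset_sum
        intro e _
        apply (hc_cont e).comp
        · exact (continuous_const.mul (continuous_const.add continuous_id)).continuousOn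
        · intro x hx
          exact Set.mem_Ici.2 (mul_nonneg hr0.le (add_nonneg (hLn e) hx.1))
      · apply continuousOn_finset_sum
        intro e he
        apply (hc_cont e).comp
        · exact (continuous_const.mul (continuous_const.sub continuous_id)).continuousOn
        · intro x hx
          have hxL : x ≤ load paths s e :=
            le_trans hx.2 (hLf₁ e (Finset.mem_sdiff.1 he).1)
          exact Set.mem_Ici.2 (mul_nonneg hr0.le (by linarith))
    have hcw : ContinuousWithinAt g (Set.Icc 0 (s i f₁)) 0 :=
      hgc 0 (Set.mem_Icc.2 ⟨le_rfl, hm0.le⟩)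
    have hev : ∀ᶠ x in nhdsWithin 0 (Set.Icc 0 (s i f₁)), g x < 0 :=
      Filter.Tendsto.eventually_lt_const hg0 hcw
    haveI := left_nhdsWithin_Ioc_neBot hm0
    have hev2 : ∀ᶠ x in nhdsWithin (0:ℝ) (Set.Ioc 0 (s i f₁)), g x < 0 :=
      hev.filter_mono (nhdsWithin_mono _ Set.Ioc_subset_Icc_self)
    obtain ⟨ε, hgε, hε0, hεm⟩ :
        ∃ ε, g ε < 0 ∧ 0 < ε ∧ ε ≤ s i f₁ := by
      obtain ⟨ε, h1, h2⟩ := (hev2.and eventually_mem_nhdsWithin).exists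
      exact ⟨ε, h1, h2.1, h2.2⟩
    set s₂ : ι → Finset E → ℝ := fun j f =>
      s j f + (if j = i ∧ f = f₂ then ε else 0) - (if j = i ∧ f = f₁ then ε else 0) with hs₂
    have hs₂nonneg : ∀ j f, 0 ≤ s₂ j f := by
      intro j f
      simp only [hs₂]
      split_ifs with h1 h2 h2
      · exact absurd (h2.2.symm.trans h1.2) hne
      · linarith [hs_nonneg j f]
      · rw [h2.1, h2.2]; linarith
      · linarith [hs_nonneg j f]
    have hsum_ite : ∀ (j : ι) (f' : Finset E), f' ∈ paths i →
        (∑ f ∈ paths j, (if j = i ∧ f = f' then ε else 0)) = if j = i then ε else 0 := by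
      intro j f' hf'
      by_cases hj : j = i
      · subst hj
        simp only [true_and, if_true, eq_self_iff_true]
        rw [Finset.sum_ite_eq' (paths j) f' (fun _ => ε)]
        simp [hf']
      · simp [hj]
    have hs₂feas : Feasible paths mass s₂ := by
      refine ⟨hs₂nonneg, fun j => ?_⟩
      simp only [hs₂]
      rw [Finset.sum_sub_distrib, Finset.sum_add_distrib,
        hsum_ite j f₂ hf₂, hsum_ite j f₁ hf₁, hs_sum j]
      by_cases hj : j = i <;> simp [hj]
    have hite_load : ∀ (e : E) (f' : Finset E), f' ∈ paths i →
        (∑ j, ∑ f ∈ (paths j).filter (fun f => e ∈ f), (if j = i ∧ f = f' then ε else 0))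
          = if e ∈ f' then ε else 0 := by
      intro e f' hf'
      rw [Finset.sum_eq_single i]
      · simp only [true_and, eq_self_iff_true]
        rw [Finset.sum_ite_eq' ((paths i).filter (fun f => e ∈ f)) f' (fun _ => ε)]
        simp [Finset.mem_filter, hf']
      · intro j _ hj
        apply Finset.sum_eq_zero
        intro f _
        simp [hj]
      · intro h; exact absurd (Finset.mem_univ i) h
    have hload₂ : ∀ e, load paths s₂ e
        = load paths s e + (if e ∈ f₂ then ε else 0) - (if e ∈ f₁ then ε else 0) := by
      intro e
      simp only [hs₂, load]
      simp only [Finset.sum_add_distrib, Finset.sum_sub_distrib]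
      rw [hite_load e f₂ hf₂, hite_load e f₁ hf₁]
    have hbound : ∀ e, (∫ t in (load paths s e)..(load paths s₂ e), c e (r * t)) ≤
        (if e ∈ f₂ \ f₁ then c e (r * (load paths s e + ε)) * ε else 0)
        + (if e ∈ f₁ \ f₂ then -(c e (r * (load paths s e - ε)) * ε) else 0) := by
      intro e
      rw [hload₂ e]
      by_cases he₁ : e ∈ f₁ <;> by_cases he₂ : e ∈ f₂
      · simp [he₁, he₂, add_sub_cancel_right, intervalIntegral.integral_same]
      · -- e ∈ f₁ only
        have hεL : ε ≤ load paths s e := le_trans hεm (hLf₁ e he₁)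
        simp only [he₁, he₂, if_neg, if_pos, Finset.mem_sdiff, not_true, not_false_iff,
          and_true, and_false, false_and, if_false, add_zero, zero_add]
        have h1 : c e (r * (load paths s e - ε))
            * (load paths s e - (load paths s e - ε))
            ≤ ∫ t in (load paths s e - ε)..(load paths s e), c e (r * t) :=
          aux_integral_ge_left (hmono e) (by linarith) (hLn e)
        have h2 : (∫ t in (load paths s e)..(load paths s e - ε), c e (r * t))
            = -∫ t in (load paths s e - ε)..(load paths s e), c e (r * t) :=
          intervalIntegral.integral_symm _ _
        have h3 : load paths s e - (load paths s e - ε) = ε := by ring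
        rw [h3] at h1
        rw [h2]
        linarith
      · -- e ∈ f₂ only
        simp only [he₁, he₂, Finset.mem_sdiff, not_true, not_false_iff,
          and_true, and_false, false_and, if_true, if_false, add_zero, zero_add, sub_zero]
        have h1 : (∫ t in (load paths s e)..(load paths s e + ε), c e (r * t))
            ≤ c e (r * (load paths s e + ε)) * (load paths s e + ε - load paths s e) :=
          aux_integral_le_right (hmono e) (hLn e) (by linarith)
        have h3 : load paths s e + ε - load paths s e = ε := by ring
        rw [h3] at h1
        linarith
      · simp [he₁, he₂, intervalIntegral.integral_same]
    have hsum_bound : (∑ e : E, ((if e ∈ f₂ \ f₁ then c e (r * (load paths s e + ε)) * ε else 0)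
        + (if e ∈ f₁ \ f₂ then -(c e (r * (load paths s e - ε)) * ε) else 0))) = g ε * ε := by
      rw [Finset.sum_add_distrib, Finset.sum_ite_mem, Finset.sum_ite_mem,
        Finset.univ_inter, Finset.univ_inter]
      simp only [hg]
      rw [Finset.sum_neg_distrib, ← Finset.sum_mul, ← Finset.sum_mul]
      ring
    have hP := hmin s₂ hs₂feas
    have hd := hPotDiff s₂ hs₂nonneg
    have hle : (∑ e, ∫ t in (load paths s e)..(load paths s₂ e), c e (r * t)) ≤ g ε * ε := by
      rw [← hsum_bound]
      exact Finset.sum_le_sum fun e _ => hbound e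
    have hneg : g ε * ε < 0 := mul_neg_of_neg_of_pos hgε hε0
    linarith


end Stmt14
end

section
/- Let G be an affine nonatomic routing game. Then every WCC equilibrium flow s* of G for homogeneous uncertainty r = 2 is socially optimal: SC(s*) ≤ SC(s') for every feasible flow s' of G. In particular the price of anarchy for WCC players with uncertainty level 2 equals 1. -/
open Finset

open AffineNRG in
/-- In an affine NRG, every WCC equilibrium flow for homogeneous uncertainty `r = 2` is
socially optimal; in particular the price of anarchy for WCC players with uncertainty
level `2` equals `1`. -/
theorem stmt_15 {E ι : Type} [Fintype E] [DecidableEq E] [Fintype ι] [Nonempty E]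
    (G : AffineNRG E ι)
    (s : ι → Finset E → ℝ) (hs : G.WCCEq (fun _ => 2) s)
    (s' : ι → Finset E → ℝ) (hs' : G.Feasible s') :
    G.SC s ≤ G.SC s' := by

  obtain ⟨⟨hsnn, hsmass⟩, heq⟩ := hs
  obtain ⟨hs'nn, hs'mass⟩ := hs'
  set c : E → ℝ := fun e => 2 * G.a e * G.load s e + G.b e with hc
  have key : ∀ (t : ι → Finset E → ℝ),
      ∑ e, c e * G.load t e = ∑ i, ∑ f ∈ G.paths i, t i f * ∑ e ∈ f, c e := by
    intro t
    unfold AffineNRG.load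
    simp_rw [Finset.mul_sum, Finset.sum_filter]
    rw [Finset.sum_comm]
    refine Finset.sum_congr rfl fun i _ => ?_
    rw [Finset.sum_comm]
    refine Finset.sum_congr rfl fun f _ => ?_
    rw [← Finset.sum_filter]
    rw [Finset.filter_mem_eq_inter, Finset.univ_inter]
    exact Finset.sum_congr rfl (fun e _ => mul_comm _ _)
  have hgrad : 0 ≤ ∑ e, c e * G.load s' e - ∑ e, c e * G.load s e := by
    rw [key s', key s, ← Finset.sum_sub_distrib]
    refine Finset.sum_nonneg fun i _ => ?_
    obtain ⟨f₀, hf₀, hf₀min⟩ :=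
      Finset.exists_min_image (G.paths i) (fun f => ∑ e ∈ f, c e) (G.paths_nonempty i)
    have hused : ∀ f ∈ G.paths i, s i f * (∑ e ∈ f, c e) = s i f * (∑ e ∈ f₀, c e) := by
      intro f hf
      rcases eq_or_lt_of_le (hsnn i f) with h0 | hpos
      · rw [← h0]; ring
      · have h1 := heq i f hf f₀ hf₀ hpos
        have h2 := hf₀min f hf
        simp only [hc] at h1 h2 ⊢
        rw [le_antisymm h1 h2]
    have hval : ∑ f ∈ G.paths i, s i f * ∑ e ∈ f, c e = G.mass i * ∑ e ∈ f₀, c e := by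
      rw [Finset.sum_congr rfl hused, ← Finset.sum_mul, hsmass i]
    have hval' : G.mass i * ∑ e ∈ f₀, c e ≤ ∑ f ∈ G.paths i, s' i f * ∑ e ∈ f, c e := by
      rw [← hs'mass i, Finset.sum_mul]
      exact Finset.sum_le_sum fun f hf =>
        mul_le_mul_of_nonneg_left (hf₀min f hf) (hs'nn i f)
    linarith
  have hconv : G.SC s + (∑ e, c e * G.load s' e - ∑ e, c e * G.load s e) ≤ G.SC s' := by
    unfold AffineNRG.SC
    rw [← Finset.sum_sub_distrib, ← Finset.sum_add_distrib]
    refine Finset.sum_le_sum fun e _ => ?_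
    have ha := G.a_nonneg e
    simp only [hc]
    nlinarith [sq_nonneg (G.load s' e - G.load s e)]
  linarith
end

section
/- Let E be a finite set with |E| ≥ 2, let n > 0, let r ≥ 1, and for each e ∈ E let c_e : ℝ_{≥0} → ℝ_{≥0} be continuous and nondecreasing. For s ∈ ℝ_{≥0}^E with Σ_e s_e = n define WCR(e, s) = c_e(r·s_e) − min_{d ≠ e} c_d(s_d/r). Then there exists a state s ∈ ℝ_{≥0}^E with Σ_e s_e = n such that for every e with s_e > 0 and every d ∈ E, WCR(e, s) ≤ WCR(d, s); i.e., a WCR equilibrium of the resource selection game exists. -/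
/-!
First let the costs be strictly increasing, and write `A_e x = c_e (r x)`, `B_e x = c_e (x / r)`.
Wardrop states for strictly increasing costs are monotone, hence 1-Lipschitz, in the total mass;
they exist by adding the resources one at a time and applying the intermediate value theorem. Take
the Wardrop state `s₀` for `A` and a resource `f` minimising `B_f (s₀ f)`, and move mass onto `f`
while the other resources keep a Wardrop state for `A` among themselves. Along this path
  `D t = A_f t + B_f t - min_{d ≠ f} A_d (s_d) - min_{d ≠ f} B_d (s_d)`
is continuous, so it changes sign or keeps one sign up to an end of the path, and such a point is
a WCR equilibrium. The key observation is that moving mass onto `f` keeps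
`min_{d ≠ f} A_d (s_d) ≤ A_f t`, so `D t ≤ 0` forces `f` to stay the minimiser of `B`; the regrets
are then `A_e - B_f` for `e ≠ f` and `A_f - min_{d ≠ f} B_d`.

Monotone costs are reduced to this case by adding `x / (k + 1)` and passing to a convergent
subsequence of equilibria; worst-case regret is continuous in the state and the costs.
-/

open Finset

/-- Worst-case regret of resource `e` in state `s` under distance-based uncertainty `r`:
`WCR(e,s) = c_e(r·s_e) − min_{d ≠ e} c_d(s_d/r)`. -/
noncomputable def WCR {E : Type} [Fintype E] (c : E → ℝ → ℝ) (r : ℝ) (s : E → ℝ)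
    (e : E) : ℝ :=
  c e (r * s e) - ⨅ d : { d : E // d ≠ e }, c d.1 (s d.1 / r)

open Filter Topology

theorem ContinuousOn.exists_mem_Icc_complementary {α : Type*} [ConditionallyCompleteLinearOrder α]
    [TopologicalSpace α] [OrderTopology α] [DenselyOrdered α] {a b : α} (hab : a ≤ b)
    {φ : α → ℝ} (hφ : ContinuousOn φ (Set.Icc a b)) :
    ∃ x ∈ Set.Icc a b, (a < x → φ x ≤ 0) ∧ (x < b → 0 ≤ φ x) := by
  by_cases ha : 0 ≤ φ a
  · exact ⟨a, Set.left_mem_Icc.2 hab, fun h => absurd h (lt_irrefl a), fun _ => ha⟩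
  by_cases hb : φ b ≤ 0
  · exact ⟨b, Set.right_mem_Icc.2 hab, fun _ => hb, fun h => absurd h (lt_irrefl b)⟩
  obtain ⟨x, hx, hφx⟩ := intermediate_value_Icc hab hφ ⟨(not_le.1 ha).le, (not_le.1 hb).le⟩
  exact ⟨x, hx, fun _ => hφx.le, fun _ => hφx.ge⟩

theorem Filter.Tendsto.ciInf_finite {ι α L : Type*} [Finite ι] [Nonempty ι]
    [ConditionallyCompleteLinearOrder L] [TopologicalSpace L] [OrderTopology L]
    {l : Filter α} {f : ι → α → L} {g : ι → L} (hf : ∀ i, Tendsto (f i) l (𝓝 (g i))) :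
    Tendsto (fun a => ⨅ i, f i a) l (𝓝 (⨅ i, g i)) := by
  have := Fintype.ofFinite ι
  simpa only [← inf'_univ_eq_ciInf] using
    Tendsto.finset_inf'_nhds_apply univ_nonempty fun i _ => hf i

theorem ContinuousOn.ciInf_finite {ι α L : Type*} [Finite ι] [Nonempty ι]
    [ConditionallyCompleteLinearOrder L] [TopologicalSpace L] [OrderTopology L]
    [TopologicalSpace α] {t : Set α} {f : ι → α → L} (hf : ∀ i, ContinuousOn (f i) t) :
    ContinuousOn (fun a => ⨅ i, f i a) t := fun x hx =>
  Tendsto.ciInf_finite fun i => hf i x hx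

theorem StrictMonoOn.comp_const_mul_Ici {g : ℝ → ℝ} (hg : StrictMonoOn g (Set.Ici 0)) {r : ℝ}
    (hr : 0 < r) : StrictMonoOn (fun x => g (r * x)) (Set.Ici 0) := fun _ hx _ hy hxy =>
  hg (mul_nonneg hr.le hx) (mul_nonneg hr.le hy) (mul_lt_mul_of_pos_left hxy hr)

theorem ContinuousOn.comp_const_mul_Ici {g : ℝ → ℝ} (hg : ContinuousOn g (Set.Ici 0)) {r : ℝ}
    (hr : 0 ≤ r) : ContinuousOn (fun x => g (r * x)) (Set.Ici 0) :=
  hg.comp (continuousOn_const.mul continuousOn_id) fun _ hx => mul_nonneg hr hx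

theorem ContinuousOn.comp_div_const_Ici {g : ℝ → ℝ} (hg : ContinuousOn g (Set.Ici 0)) {r : ℝ}
    (hr : 0 ≤ r) : ContinuousOn (fun x => g (x / r)) (Set.Ici 0) :=
  hg.comp (continuousOn_id.div_const r) fun _ hx => div_nonneg hx hr

section Wardrop

variable {E : Type} {F : Finset E} {h : E → ℝ → ℝ} {s t : E → ℝ}

def IsWardropOn (F : Finset E) (h : E → ℝ → ℝ) (s : E → ℝ) : Prop :=
  (∀ e ∈ F, 0 ≤ s e) ∧ ∀ e ∈ F, 0 < s e → ∀ d ∈ F, h e (s e) ≤ h d (s d)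

theorem IsWardropOn.mono {G : Finset E} (hs : IsWardropOn F h s) (hGF : G ⊆ F) :
    IsWardropOn G h s :=
  ⟨fun e he => hs.1 e (hGF he), fun e he he0 d hd => hs.2 e (hGF he) he0 d (hGF hd)⟩

theorem IsWardropOn.congr (hs : IsWardropOn F h s) (hst : ∀ e ∈ F, s e = t e) :
    IsWardropOn F h t := by
  refine ⟨fun e he => hst e he ▸ hs.1 e he, fun e he he0 d hd => ?_⟩
  rw [← hst e he] at he0 ⊢
  rw [← hst d hd]
  exact hs.2 e he he0 d hd

theorem IsWardropOn.le_of_sum_le (hh : ∀ e ∈ F, StrictMonoOn (h e) (Set.Ici 0))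
    (hs : IsWardropOn F h s) (ht : IsWardropOn F h t) (hst : ∑ e ∈ F, s e ≤ ∑ e ∈ F, t e) :
    ∀ e ∈ F, s e ≤ t e := by
  intro a ha
  by_contra! hlt
  obtain ⟨b, hb, hsb⟩ : ∃ b ∈ F, s b < t b := by
    by_contra! hall
    exact (sum_lt_sum hall ⟨a, ha, hlt⟩).not_ge hst
  have := calc h a (s a) ≤ h b (s b) := hs.2 a ha ((ht.1 a ha).trans_lt hlt) b hb
    _ < h b (t b) := hh b hb (hs.1 b hb) (ht.1 b hb) hsb
    _ ≤ h a (t a) := ht.2 b hb ((hs.1 b hb).trans_lt hsb) a ha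
    _ < h a (s a) := hh a ha (ht.1 a ha) (hs.1 a ha) hlt
  exact lt_irrefl _ this

theorem IsWardropOn.eqOn_of_sum_eq (hh : ∀ e ∈ F, StrictMonoOn (h e) (Set.Ici 0))
    (hs : IsWardropOn F h s) (ht : IsWardropOn F h t) (hst : ∑ e ∈ F, s e = ∑ e ∈ F, t e) :
    ∀ e ∈ F, s e = t e := fun e he =>
  le_antisymm (hs.le_of_sum_le hh ht hst.le e he) (ht.le_of_sum_le hh hs hst.ge e he)

theorem IsWardropOn.sub_le_sub_of_sum_le (hh : ∀ e ∈ F, StrictMonoOn (h e) (Set.Ici 0))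
    (hs : IsWardropOn F h s) (ht : IsWardropOn F h t) (hst : ∑ e ∈ F, s e ≤ ∑ e ∈ F, t e) :
    ∀ e ∈ F, t e - s e ≤ ∑ d ∈ F, t d - ∑ d ∈ F, s d := by
  intro e he
  rw [← sum_sub_distrib]
  exact single_le_sum (f := fun d => t d - s d)
    (fun d hd => sub_nonneg.2 (hs.le_of_sum_le hh ht hst d hd)) he

theorem IsWardropOn.update_cons [DecidableEq E] {a : E} (ha : a ∉ F) (hs : IsWardropOn F h s)
    {x : ℝ} (hx : 0 ≤ x) (hax : 0 < x → ∀ d ∈ F, h a x ≤ h d (s d))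
    (hxa : ∀ e ∈ F, 0 < s e → h e (s e) ≤ h a x) :
    IsWardropOn (F.cons a ha) h (Function.update s a x) := by
  have hF : ∀ e ∈ F, Function.update s a x e = s e := fun e he =>
    Function.update_of_ne (ne_of_mem_of_not_mem he ha) _ _
  refine ⟨?_, ?_⟩
  · simp only [forall_mem_cons, Function.update_self]
    exact ⟨hx, fun e he => (hF e he).symm ▸ hs.1 e he⟩
  · simp only [forall_mem_cons, Function.update_self]
    refine ⟨fun hx0 => ⟨le_rfl, fun d hd => (hF d hd).symm ▸ hax hx0 d hd⟩,
      fun e he he0 => ?_⟩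
    rw [hF e he] at he0 ⊢
    exact ⟨hxa e he he0, fun d hd => (hF d hd).symm ▸ hs.2 e he he0 d hd⟩

theorem IsWardropOn.iInf_ne_le [Fintype E] [DecidableEq E] {f : E}
    (hh : ∀ e, StrictMonoOn (h e) (Set.Ici 0)) (hs : IsWardropOn univ h s)
    (ht : IsWardropOn (univ.erase f) h t)
    (hst : ∑ e ∈ univ.erase f, t e ≤ ∑ e ∈ univ.erase f, s e)
    (hs_pos : 0 < ∑ e ∈ univ.erase f, s e) (hf : s f ≤ t f) :
    ⨅ d : {d : E // d ≠ f}, h d (t d) ≤ h f (t f) := by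
  obtain ⟨e, he, he0⟩ : ∃ e ∈ univ.erase f, 0 < s e := by
    by_contra! hall
    exact hs_pos.not_ge (sum_nonpos hall)
  calc ⨅ d : {d : E // d ≠ f}, h d (t d) ≤ h e (t e) :=
        ciInf_le (Set.finite_range _).bddBelow (⟨e, ne_of_mem_erase he⟩ : {d : E // d ≠ f})
    _ ≤ h e (s e) := (hh e).monotoneOn (ht.1 e he) (hs.1 e (mem_univ e))
        (ht.le_of_sum_le (fun d _ => hh d) (hs.mono (subset_univ _)) hst e he)
    _ ≤ h f (s f) := hs.2 e (mem_univ e) he0 f (mem_univ f)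
    _ ≤ h f (t f) := (hh f).monotoneOn (hs.1 f (mem_univ f)) ((hs.1 f (mem_univ f)).trans hf) hf

def IsWardropFamily (F : Finset E) (h : E → ℝ → ℝ) (W : ℝ → E → ℝ) : Prop :=
  ∀ m, 0 ≤ m → IsWardropOn F h (W m) ∧ ∑ e ∈ F, W m e = m

variable {W : ℝ → E → ℝ}

theorem IsWardropFamily.lipschitzOnWith (hh : ∀ e ∈ F, StrictMonoOn (h e) (Set.Ici 0))
    (hW : IsWardropFamily F h W) {e : E} (he : e ∈ F) :
    LipschitzOnWith 1 (fun m => W m e) (Set.Ici 0) := by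
  refine LipschitzOnWith.of_le_add fun m hm m' hm' => ?_
  obtain ⟨hWm, hsum⟩ := hW m hm
  obtain ⟨hWm', hsum'⟩ := hW m' hm'
  rw [Real.dist_eq]
  rcases le_total m m' with hle | hle
  · have := hWm.le_of_sum_le hh hWm' (by rw [hsum, hsum']; exact hle) e he
    linarith [abs_nonneg (m - m')]
  · have := hWm'.sub_le_sub_of_sum_le hh hWm (by rw [hsum, hsum']; exact hle) e he
    rw [hsum, hsum'] at this
    linarith [le_abs_self (m - m')]

theorem IsWardropFamily.exists_cons [DecidableEq E] (hF : F.Nonempty)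
    (hh : ∀ e, StrictMonoOn (h e) (Set.Ici 0)) (hc : ∀ e, ContinuousOn (h e) (Set.Ici 0))
    (hW : IsWardropFamily F h W) {a : E} (ha : a ∉ F) {m : ℝ} (hm : 0 ≤ m) :
    ∃ s, IsWardropOn (F.cons a ha) h s ∧ ∑ e ∈ F.cons a ha, s e = m := by
  set level : ℝ → ℝ := fun y => F.inf' hF fun d => h d (W y d)
  have hlevel : ContinuousOn (fun x => h a x - level (m - x)) (Set.Icc 0 m) := by
    refine (hc a).mono (fun x hx => hx.1) |>.sub ?_
    refine ContinuousOn.finset_inf'_apply hF fun d hd => ?_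
    have hWd := (hW.lipschitzOnWith (fun e _ => hh e) hd).continuousOn
    exact (hc d).comp (hWd.comp (continuousOn_const.sub continuousOn_id)
      fun x hx => sub_nonneg.2 hx.2) fun x hx => (hW (m - x) (sub_nonneg.2 hx.2)).1.1 d hd
  obtain ⟨x, hx, hx_pos, hx_lt⟩ := hlevel.exists_mem_Icc_complementary hm
  obtain ⟨hWx, hsum⟩ := hW (m - x) (sub_nonneg.2 hx.2)
  refine ⟨Function.update (W (m - x)) a x, hWx.update_cons ha hx.1 ?_ ?_, ?_⟩
  · intro hx0 d hd
    linarith [hx_pos hx0, inf'_le (fun d => h d (W (m - x) d)) hd]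
  · intro e he he0
    have hxm : x < m := by
      linarith [single_le_sum (fun d hd => hWx.1 d hd) he]
    have hle : h e (W (m - x) e) ≤ level (m - x) :=
      le_inf' _ _ fun d hd => hWx.2 e he he0 d hd
    linarith [hx_lt hxm]
  · rw [sum_cons, Function.update_self,
      sum_congr rfl fun e he => Function.update_of_ne (ne_of_mem_of_not_mem he ha) _ _,
      hsum, add_sub_cancel]

theorem exists_isWardropFamily [DecidableEq E] (hF : F.Nonempty)
    (hh : ∀ e, StrictMonoOn (h e) (Set.Ici 0)) (hc : ∀ e, ContinuousOn (h e) (Set.Ici 0)) :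
    ∃ W, IsWardropFamily F h W := by
  induction hF using Finset.Nonempty.cons_induction with
  | singleton a =>
    exact ⟨fun m _ => m, fun m hm => ⟨⟨by simpa using hm, by simp⟩, by simp⟩⟩
  | cons a F ha hF ih =>
    obtain ⟨W, hW⟩ := ih
    choose! s hs using fun m (hm : 0 ≤ m) => hW.exists_cons hF hh hc ha hm
    exact ⟨s, hs⟩

end Wardrop

section Transfer

variable {E : Type} [DecidableEq E] {f : E} {h : E → ℝ → ℝ} {W : ℝ → E → ℝ}
  {n t : ℝ}

def transferState (W : ℝ → E → ℝ) (n : ℝ) (f : E) (t : ℝ) : E → ℝ :=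
  Function.update (W (n - t)) f t

@[simp]
theorem transferState_self : transferState W n f t f = t :=
  Function.update_self _ _ _

theorem transferState_of_ne {d : E} (hd : d ≠ f) : transferState W n f t d = W (n - t) d :=
  Function.update_of_ne hd _ _

namespace IsWardropFamily

variable [Fintype E]

theorem isWardropOn_transferState (hW : IsWardropFamily (univ.erase f) h W) (htn : t ≤ n) :
    IsWardropOn (univ.erase f) h (transferState W n f t) :=
  (hW (n - t) (sub_nonneg.2 htn)).1.congr fun _ he =>
    (transferState_of_ne (ne_of_mem_erase he)).symm

theorem sum_erase_transferState (hW : IsWardropFamily (univ.erase f) h W) (htn : t ≤ n) :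
    ∑ e ∈ univ.erase f, transferState W n f t e = n - t := by
  rw [sum_congr rfl fun e he => transferState_of_ne (ne_of_mem_erase he)]
  exact (hW (n - t) (sub_nonneg.2 htn)).2

theorem sum_transferState (hW : IsWardropFamily (univ.erase f) h W) (htn : t ≤ n) :
    ∑ e, transferState W n f t e = n := by
  rw [← add_sum_erase _ _ (mem_univ f), hW.sum_erase_transferState htn, transferState_self,
    add_sub_cancel]

theorem transferState_nonneg (hW : IsWardropFamily (univ.erase f) h W) (ht : 0 ≤ t)
    (htn : t ≤ n) (e : E) : 0 ≤ transferState W n f t e := by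
  rcases eq_or_ne e f with rfl | hef
  · simpa using ht
  · exact (hW.isWardropOn_transferState htn).1 e (mem_erase.2 ⟨hef, mem_univ e⟩)

theorem transferState_eq (hW : IsWardropFamily (univ.erase f) h W)
    (hh : ∀ e ∈ univ.erase f, StrictMonoOn (h e) (Set.Ici 0))
    {s₀ : E → ℝ} (hs₀ : IsWardropOn univ h s₀) (hs₀_sum : ∑ e, s₀ e = n) :
    transferState W n f (s₀ f) = s₀ := by
  have hs₀f : s₀ f ≤ n := hs₀_sum ▸ single_le_sum (fun e _ => hs₀.1 e (mem_univ e)) (mem_univ f)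
  funext e
  rcases eq_or_ne e f with rfl | hef
  · exact transferState_self
  refine (hW.isWardropOn_transferState hs₀f).eqOn_of_sum_eq hh (hs₀.mono (subset_univ _)) ?_ e
    (mem_erase.2 ⟨hef, mem_univ e⟩)
  rw [hW.sum_erase_transferState hs₀f]
  linarith [add_sum_erase univ s₀ (mem_univ f)]

theorem iInf_transferState_le (hW : IsWardropFamily (univ.erase f) h W)
    (hh : ∀ e, StrictMonoOn (h e) (Set.Ici 0)) {s₀ : E → ℝ} (hs₀ : IsWardropOn univ h s₀)
    (hs₀_sum : ∑ e, s₀ e = n) (ht : t ∈ Set.Ioc (s₀ f) n) :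
    ⨅ d : {d : E // d ≠ f}, h d (transferState W n f t d) ≤ h f t := by
  have hs₀f : s₀ f ≤ n := ht.1.le.trans ht.2
  have h_erase : ∑ e ∈ univ.erase f, s₀ e = n - s₀ f := by
    linarith [add_sum_erase univ s₀ (mem_univ f)]
  have hle := hs₀.iInf_ne_le hh (hW.isWardropOn_transferState ht.2) ?_ ?_
    (by rw [transferState_self]; exact ht.1.le)
  · rwa [transferState_self] at hle
  · rw [hW.sum_erase_transferState ht.2, h_erase]
    linarith [ht.1]
  · rw [h_erase]
    linarith [ht.1, ht.2]

theorem continuousOn_iInf_transferState [Nontrivial E]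
    (hW : IsWardropFamily (univ.erase f) h W)
    (hh : ∀ e ∈ univ.erase f, StrictMonoOn (h e) (Set.Ici 0)) {G : E → ℝ → ℝ}
    (hG : ∀ e, ContinuousOn (G e) (Set.Ici 0)) :
    ContinuousOn (fun t => ⨅ d : {d : E // d ≠ f}, G d (transferState W n f t d)) (Set.Iic n) := by
  have : Nonempty {d : E // d ≠ f} := nonempty_subtype.2 (exists_ne f)
  refine ContinuousOn.ciInf_finite fun d => ?_
  have hd : (d : E) ∈ univ.erase f := mem_erase.2 ⟨d.2, mem_univ _⟩
  simp only [transferState_of_ne d.2]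
  exact (hG d).comp ((hW.lipschitzOnWith hh hd).continuousOn.comp
    (continuousOn_const.sub continuousOn_id) fun t ht => Set.mem_Ici.2 (sub_nonneg.2 ht))
    fun t ht => (hW (n - t) (sub_nonneg.2 ht)).1.1 d hd

end IsWardropFamily

end Transfer

theorem iInf_ne_eq_of_forall_le {E : Type} [Finite E] {g : E → ℝ} {f e : E} (hfe : f ≠ e)
    (hf : ∀ d, g f ≤ g d) : ⨅ d : {d : E // d ≠ e}, g d = g f :=
  have : Nonempty {d : E // d ≠ e} := ⟨⟨f, hfe⟩⟩
  le_antisymm (ciInf_le (Set.finite_range _).bddBelow (⟨f, hfe⟩ : {d : E // d ≠ e}))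
    (le_ciInf fun d => hf d)

section Equilibrium

variable {E : Type} [Fintype E] [DecidableEq E]

def IsWCREquilibrium (c : E → ℝ → ℝ) (r : ℝ) (s : E → ℝ) : Prop :=
  ∀ e, 0 < s e → ∀ d, WCR c r s e ≤ WCR c r s d

theorem isWCREquilibrium_of_isWardropOn_erase {c : E → ℝ → ℝ} {r : ℝ} {s : E → ℝ} {f : E}
    (hW : IsWardropOn (univ.erase f) (fun e x => c e (r * x)) s)
    (hf : ∀ d, c f (s f / r) ≤ c d (s d / r))
    (hf_occ : 0 < s f → c f (r * s f) + c f (s f / r) ≤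
      (⨅ d : {d : E // d ≠ f}, c d (r * s d)) + ⨅ d : {d : E // d ≠ f}, c d (s d / r))
    (hf_free : (∃ e ≠ f, 0 < s e) → (⨅ d : {d : E // d ≠ f}, c d (r * s d)) +
      (⨅ d : {d : E // d ≠ f}, c d (s d / r)) ≤ c f (r * s f) + c f (s f / r)) :
    IsWCREquilibrium c r s := by
  have hB : ∀ e ≠ f, ⨅ d : {d : E // d ≠ e}, c d (s d / r) = c f (s f / r) :=
    fun e hef => iInf_ne_eq_of_forall_le (g := fun d => c d (s d / r)) (Ne.symm hef) hf
  have hmem : ∀ {d}, d ≠ f → d ∈ univ.erase f := fun hd => mem_erase.2 ⟨hd, mem_univ _⟩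
  intro e he d
  unfold WCR
  rcases eq_or_ne e f with rfl | hef
  · rcases eq_or_ne d e with rfl | hde
    · rfl
    have hA : ⨅ d : {d : E // d ≠ e}, c d (r * s d) ≤ c d (r * s d) :=
      ciInf_le (Set.finite_range _).bddBelow (⟨d, hde⟩ : {d : E // d ≠ e})
    rw [hB d hde]
    linarith [hf_occ he]
  rw [hB e hef]
  rcases eq_or_ne d f with rfl | hdf
  · have : Nonempty {d' : E // d' ≠ d} := ⟨⟨e, hef⟩⟩
    have hA : c e (r * s e) ≤ ⨅ d' : {d' : E // d' ≠ d}, c d' (r * s d') :=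
      le_ciInf fun d' => hW.2 e (hmem hef) he d' (hmem d'.2)
    linarith [hf_free ⟨e, hef, he⟩]
  · rw [hB d hdf]
    linarith [hW.2 e (hmem hef) he d (hmem hdf)]

theorem exists_isWCREquilibrium_transferState [Nontrivial E] {n r : ℝ} (hr : 0 < r)
    {c : E → ℝ → ℝ} (hc_cont : ∀ e, ContinuousOn (c e) (Set.Ici 0))
    (hc_mono : ∀ e, StrictMonoOn (c e) (Set.Ici 0)) {s₀ : E → ℝ}
    (hs₀ : IsWardropOn univ (fun e x => c e (r * x)) s₀) (hs₀_sum : ∑ e, s₀ e = n) {f : E}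
    (hf : ∀ d, c f (s₀ f / r) ≤ c d (s₀ d / r)) {W : ℝ → E → ℝ}
    (hW : IsWardropFamily (univ.erase f) (fun e x => c e (r * x)) W) :
    ∃ t ∈ Set.Icc (s₀ f) n, IsWCREquilibrium c r (transferState W n f t) := by
  have hA_mono e := (hc_mono e).comp_const_mul_Ici hr
  have hA_cont e := (hc_cont e).comp_const_mul_Ici hr.le
  have hB_cont e := (hc_cont e).comp_div_const_Ici hr.le
  have : Nonempty {d : E // d ≠ f} := nonempty_subtype.2 (exists_ne f)
  set σ := transferState W n f
  set L : ℝ → ℝ := fun t => ⨅ d : {d : E // d ≠ f}, c d (r * σ t d)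
  set M : ℝ → ℝ := fun t => ⨅ d : {d : E // d ≠ f}, c d (σ t d / r)
  have hσf : ∀ t, σ t f = t := fun _ => transferState_self
  have hσ₀ : σ (s₀ f) = s₀ := hW.transferState_eq (fun e _ => hA_mono e) hs₀ hs₀_sum
  have hs₀f : s₀ f ∈ Set.Icc 0 n := ⟨hs₀.1 f (mem_univ f),
    hs₀_sum ▸ single_le_sum (fun e _ => hs₀.1 e (mem_univ e)) (mem_univ f)⟩
  have hD : ContinuousOn (fun t => c f (r * t) + c f (t / r) - L t - M t)
      (Set.Icc (s₀ f) n) := by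
    have hIci : Set.Icc (s₀ f) n ⊆ Set.Ici 0 := fun t ht => hs₀f.1.trans ht.1
    have hIic : Set.Icc (s₀ f) n ⊆ Set.Iic n := fun t ht => ht.2
    exact ((((hA_cont f).mono hIci).add ((hB_cont f).mono hIci)).sub
      ((hW.continuousOn_iInf_transferState (fun e _ => hA_mono e) hA_cont).mono hIic)).sub
      ((hW.continuousOn_iInf_transferState (fun e _ => hA_mono e) hB_cont).mono hIic)
  obtain ⟨t, ht, hD_neg, hD_nonneg⟩ := hD.exists_mem_Icc_complementary hs₀f.2
  have hσW : IsWardropOn (univ.erase f) (fun e x => c e (r * x)) (σ t) :=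
    hW.isWardropOn_transferState ht.2
  have hmin_occ : (∀ d, c f (t / r) ≤ c d (σ t d / r)) ∧
      (0 < t → c f (r * t) + c f (t / r) ≤ L t + M t) := by
    rcases ht.1.eq_or_lt with rfl | hlt
    · simp only [L, M, hσ₀]
      exact ⟨hf, fun hpos => add_le_add
        (le_ciInf fun d => hs₀.2 f (mem_univ f) hpos d (mem_univ _)) (le_ciInf fun d => hf d)⟩
    have hL : L t ≤ c f (r * t) := hW.iInf_transferState_le hA_mono hs₀ hs₀_sum ⟨hlt, ht.2⟩
    have hBM : c f (t / r) ≤ M t := by linarith [hD_neg hlt]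
    refine ⟨fun d => ?_, fun _ => by linarith [hD_neg hlt]⟩
    rcases eq_or_ne d f with rfl | hdf
    · rw [hσf]
    · exact hBM.trans (ciInf_le (Set.finite_range _).bddBelow (⟨d, hdf⟩ : {d : E // d ≠ f}))
  refine ⟨t, ht, isWCREquilibrium_of_isWardropOn_erase hσW ?_ ?_ ?_⟩ <;> rw [hσf]
  · exact hmin_occ.1
  · exact hmin_occ.2
  · rintro ⟨e, hef, he⟩
    have he_le := single_le_sum (f := σ t) (fun d hd => hσW.1 d hd)
      (mem_erase.2 ⟨hef, mem_univ e⟩)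
    rw [hW.sum_erase_transferState ht.2] at he_le
    linarith [hD_nonneg (by linarith)]

theorem exists_isWCREquilibrium_of_strictMonoOn [Nontrivial E] {n r : ℝ} (hn : 0 ≤ n)
    (hr : 0 < r) {c : E → ℝ → ℝ} (hc_cont : ∀ e, ContinuousOn (c e) (Set.Ici 0))
    (hc_mono : ∀ e, StrictMonoOn (c e) (Set.Ici 0)) :
    ∃ s : E → ℝ, (∀ e, 0 ≤ s e) ∧ ∑ e, s e = n ∧ IsWCREquilibrium c r s := by
  have hA_mono e := (hc_mono e).comp_const_mul_Ici hr
  have hA_cont e := (hc_cont e).comp_const_mul_Ici hr.le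
  obtain ⟨W₀, hW₀⟩ := exists_isWardropFamily univ_nonempty hA_mono hA_cont
  obtain ⟨hs₀, hs₀_sum⟩ := hW₀ n hn
  obtain ⟨f, -, hf⟩ := exists_min_image univ (fun d => c d (W₀ n d / r)) univ_nonempty
  obtain ⟨g, hg⟩ := exists_ne f
  obtain ⟨W, hW⟩ := exists_isWardropFamily ⟨g, mem_erase.2 ⟨hg, mem_univ g⟩⟩ hA_mono hA_cont
  obtain ⟨t, ht, heq⟩ := exists_isWCREquilibrium_transferState hr hc_cont hc_mono hs₀ hs₀_sum
    (fun d => hf d (mem_univ d)) hW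
  exact ⟨_, hW.transferState_nonneg ((hs₀.1 f (mem_univ f)).trans ht.1) ht.2,
    hW.sum_transferState ht.2, heq⟩

end Equilibrium

theorem ContinuousOn.tendsto_add_mul {ι : Type*} {l : Filter ι} [l.NeBot] {g : ℝ → ℝ}
    (hg : ContinuousOn g (Set.Ici 0)) {ε y : ι → ℝ} {y₀ : ℝ} (hε : Tendsto ε l (𝓝 0))
    (hy : ∀ i, 0 ≤ y i) (hy₀ : Tendsto y l (𝓝 y₀)) :
    Tendsto (fun i => g (y i) + ε i * y i) l (𝓝 (g y₀)) := by
  have hg₀ := (hg y₀ (ge_of_tendsto' hy₀ hy)).tendsto.comp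
    (tendsto_nhdsWithin_iff.2 ⟨hy₀, Eventually.of_forall hy⟩)
  simpa using hg₀.add (hε.mul hy₀)

theorem exists_tendsto_subseq_of_sum_eq {E : Type} [Fintype E] {n : ℝ} {s : ℕ → E → ℝ}
    (hs : ∀ k e, 0 ≤ s k e) (hsum : ∀ k, ∑ e, s k e = n) :
    ∃ a : E → ℝ, ((∀ e, 0 ≤ a e) ∧ ∑ e, a e = n) ∧
      ∃ φ : ℕ → ℕ, StrictMono φ ∧ Tendsto (s ∘ φ) atTop (𝓝 a) := by
  have hmem : ∀ k, s k ∈ Set.Icc 0 (fun _ => n) := fun k =>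
    ⟨hs k, fun e => hsum k ▸ single_le_sum (fun d _ => hs k d) (mem_univ e)⟩
  obtain ⟨a, ha, φ, hφ, hlim⟩ := isCompact_Icc.tendsto_subseq hmem
  have hsum_lim : Tendsto (fun k => ∑ e, s (φ k) e) atTop (𝓝 (∑ e, a e)) :=
    tendsto_finsetSum _ fun e _ => tendsto_pi_nhds.1 hlim e
  simp only [hsum] at hsum_lim
  exact ⟨a, ⟨ha.1, tendsto_nhds_unique hsum_lim tendsto_const_nhds⟩, φ, hφ, hlim⟩

section Limit

variable {E : Type} [Fintype E] [Nontrivial E] {ι : Type*} {l : Filter ι} {r : ℝ}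
  {c : E → ℝ → ℝ} {ck : ι → E → ℝ → ℝ} {s : ι → E → ℝ} {a : E → ℝ}

theorem tendsto_WCR (hr : 0 < r)
    (hck : ∀ e (y : ι → ℝ) (y₀ : ℝ), (∀ i, 0 ≤ y i) → Tendsto y l (𝓝 y₀) →
      Tendsto (fun i => ck i e (y i)) l (𝓝 (c e y₀)))
    (hs : ∀ i e, 0 ≤ s i e) (hsa : Tendsto s l (𝓝 a)) (e : E) :
    Tendsto (fun i => WCR (ck i) r (s i) e) l (𝓝 (WCR c r a e)) := by
  have : Nonempty {d : E // d ≠ e} := nonempty_subtype.2 (exists_ne e)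
  have hcoord : ∀ d, Tendsto (fun i => s i d) l (𝓝 (a d)) := tendsto_pi_nhds.1 hsa
  exact (hck e _ _ (fun i => mul_nonneg hr.le (hs i e)) ((hcoord e).const_mul r)).sub
    (Tendsto.ciInf_finite fun d =>
      hck d _ _ (fun i => div_nonneg (hs i d) hr.le) ((hcoord d).div_const r))

theorem IsWCREquilibrium.of_tendsto [l.NeBot] (hr : 0 < r)
    (hck : ∀ e (y : ι → ℝ) (y₀ : ℝ), (∀ i, 0 ≤ y i) → Tendsto y l (𝓝 y₀) →
      Tendsto (fun i => ck i e (y i)) l (𝓝 (c e y₀)))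
    (hs : ∀ i e, 0 ≤ s i e) (hsa : Tendsto s l (𝓝 a))
    (heq : ∀ i, IsWCREquilibrium (ck i) r (s i)) : IsWCREquilibrium c r a := by
  intro e he d
  have hpos : ∀ᶠ i in l, 0 < s i e := (tendsto_pi_nhds.1 hsa e).eventually (eventually_gt_nhds he)
  exact le_of_tendsto_of_tendsto (tendsto_WCR hr hck hs hsa e) (tendsto_WCR hr hck hs hsa d)
    (hpos.mono fun i hi => heq i e hi d)

end Limit

theorem stmt_16_general {E : Type} [Fintype E] [DecidableEq E] (hE : 2 ≤ Fintype.card E)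
    (n : ℝ) (hn : 0 < n) (r : ℝ) (hr : 1 ≤ r)
    (c : E → ℝ → ℝ)
    (hc_cont : ∀ e, ContinuousOn (c e) (Set.Ici 0))
    (hc_mono : ∀ e, MonotoneOn (c e) (Set.Ici 0)) :
    ∃ s : E → ℝ, (∀ e, 0 ≤ s e) ∧ ∑ e, s e = n ∧
      ∀ e, 0 < s e → ∀ d, WCR c r s e ≤ WCR c r s d := by
  have : Nontrivial E := Fintype.one_lt_card_iff_nontrivial.mp hE
  have hr₀ : 0 < r := one_pos.trans_le hr
  set ε : ℕ → ℝ := fun k => 1 / ((k : ℝ) + 1)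
  have hε : Tendsto ε atTop (𝓝 0) := tendsto_one_div_add_atTop_nhds_zero_nat
  choose s hs₀ hs_sum hs_eq using fun k =>
    exists_isWCREquilibrium_of_strictMonoOn (c := fun e x => c e x + ε k * x) hn.le hr₀
      (fun e => (hc_cont e).add (continuousOn_const.mul continuousOn_id))
      (fun e => (hc_mono e).add_strictMono
        ((strictMono_mul_left_of_pos (by positivity)).strictMonoOn _))
  obtain ⟨a, ha, φ, hφ, hlim⟩ := exists_tendsto_subseq_of_sum_eq hs₀ hs_sum
  exact ⟨a, ha.1, ha.2, IsWCREquilibrium.of_tendsto hr₀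
    (fun e y y₀ hy hy₀ => (hc_cont e).tendsto_add_mul (hε.comp hφ.tendsto_atTop) hy hy₀)
    (fun k => hs₀ (φ k)) hlim fun k => hs_eq (φ k)⟩

/-- In an RSG with `|E| ≥ 2`, total mass `n > 0`, uncertainty `r ≥ 1` and continuous
nondecreasing nonnegative cost functions, a WCR equilibrium exists: a state in which every
occupied resource has worst-case regret no larger than that of any other resource. -/
theorem stmt_16 {E : Type} [Fintype E] [DecidableEq E] (hE : 2 ≤ Fintype.card E)
    (n : ℝ) (hn : 0 < n) (r : ℝ) (hr : 1 ≤ r)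
    (c : E → ℝ → ℝ)
    (hc_nonneg : ∀ e t, 0 ≤ t → 0 ≤ c e t)
    (hc_cont : ∀ e, ContinuousOn (c e) (Set.Ici 0))
    (hc_mono : ∀ e, MonotoneOn (c e) (Set.Ici 0)) :
    ∃ s : E → ℝ, (∀ e, 0 ≤ s e) ∧ ∑ e, s e = n ∧
      ∀ e, 0 < s e → ∀ d, WCR c r s e ≤ WCR c r s d :=
  stmt_16_general hE n hn r hr c hc_cont hc_mono
end
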